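/- arXiv:2312.15902 — 8 statements merged into one kernel-verified Lean document; each statement's English description precedes it below -/
import Mathlib

section
/- Let G be a simple graph on n vertices with matching number β. If n > 2β, then the number of edges of G is at most the maximum of C(2β+1, 2) and C(β, 2) + β(n − β). -/
/-!
Induct on the vertex set `s`, with `k` the matching number of `G[s]`. If `|s| ≤ 2k + 1`, count
all pairs. If deleting some vertex `v` lowers the matching number, then `v` lies in every maximum
matching: delete it, losing at most `|s| - 1` edges, and use the bound for `(|s| - 1, k - 1)`.
Otherwise every vertex is missed by some maximum matching. If `G[s]` is disconnected, the bound
is superadditive over the two sides; if it is connected, Gallai's lemma gives `|s| ≤ 2k + 1`,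
which is the first case.

Gallai's lemma (after Lovász–Plummer): let the maximum matching `M` miss `u ≠ v` at minimal
distance, let `z` be the neighbour of `u` on a shortest `u`–`v` path, and let `N` be a maximum
matching missing `z` with `|N ∩ M|` largest. Minimality forces `N` to cover `u` and `v`. As `M`
and `N` miss equally many vertices, `N` misses some `w ≠ z` covered by an edge `wy ∈ M`, and
replacing the `N`-edge at `y` by `wy` enlarges `N ∩ M`.
-/

open SimpleGraph

/-- The matching number of a graph: the maximum size of a matching. -/
noncomputable def matchNum {V : Type*} (G : SimpleGraph V) : ℕ :=
  sSup {k : ℕ | ∃ M : G.Subgraph, M.IsMatching ∧ M.edgeSet.ncard = k}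

-- The edge counts of `K_{2k+1}` plus isolated vertices, and of `K_k` joined to `n - k`
-- independent vertices.
def erdosGallaiBound (n k : ℕ) : ℕ := max ((2 * k + 1).choose 2) (k.choose 2 + k * (n - k))

lemma cast_erdosGallaiBound {n k : ℕ} (hk : k ≤ n) :
    (erdosGallaiBound n k : ℚ) =
      max ((2 * k + 1) * (2 * k) / 2 : ℚ) (k * (k - 1) / 2 + k * (n - k)) := by
  simp only [erdosGallaiBound, Nat.cast_max, Nat.cast_add, Nat.cast_mul, Nat.cast_choose_two,
    Nat.cast_sub hk]
  push_cast
  ring_nf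

lemma erdosGallaiBound_mono {n k k' : ℕ} (hk : k' ≤ k) (hn : 2 * k ≤ n) :
    erdosGallaiBound n k' ≤ erdosGallaiBound n k := by
  refine max_le_max (Nat.choose_le_choose 2 (by omega))
    (add_le_add (Nat.choose_le_choose 2 hk) ?_)
  zify [(by omega : k ≤ n), (by omega : k' ≤ n)]
  nlinarith

lemma erdosGallaiBound_add_le_succ {n k : ℕ} (hn : 2 * k + 3 ≤ n) :
    erdosGallaiBound n k + n ≤ erdosGallaiBound (n + 1) (k + 1) := by
  rw [← Nat.cast_le (α := ℚ), Nat.cast_add, cast_erdosGallaiBound (by omega),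
    cast_erdosGallaiBound (by omega)]
  have hn' : (2 * k + 3 : ℚ) ≤ n := by exact_mod_cast hn
  push_cast
  rw [← max_add_add_right]
  refine max_le ?_ (le_max_of_le_right (by nlinarith))
  rcases le_total (n : ℚ) (4 * k + 3) with h | h
  · exact le_max_of_le_left (by nlinarith)
  · exact le_max_of_le_right (by nlinarith)

lemma erdosGallaiBound_add_le {n₁ n₂ a b : ℕ} (ha : 2 * a ≤ n₁) (hb : 2 * b ≤ n₂) :
    erdosGallaiBound n₁ a + erdosGallaiBound n₂ b ≤ erdosGallaiBound (n₁ + n₂) (a + b) := by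
  rw [← Nat.cast_le (α := ℚ), Nat.cast_add, cast_erdosGallaiBound (by omega),
    cast_erdosGallaiBound (by omega), cast_erdosGallaiBound (by omega)]
  have ha' : (2 * a : ℚ) ≤ n₁ := by exact_mod_cast ha
  have hb' : (2 * b : ℚ) ≤ n₂ := by exact_mod_cast hb
  have a0 : (0 : ℚ) ≤ a := by positivity
  have b0 : (0 : ℚ) ≤ b := by positivity
  push_cast
  rw [← max_add_add_right, ← max_add_add_left, ← max_add_add_left]
  refine max_le (max_le ?_ ?_) (max_le ?_ ?_)
  · exact le_max_of_le_left (by nlinarith)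
  · rcases le_total (2 * (n₂ : ℚ)) (8 * a + 5 * b + 3) with h | h
    · exact le_max_of_le_left (by nlinarith)
    · exact le_max_of_le_right (by nlinarith)
  · rcases le_total (2 * (n₁ : ℚ)) (8 * b + 5 * a + 3) with h | h
    · exact le_max_of_le_left (by nlinarith)
    · exact le_max_of_le_right (by nlinarith)
  · exact le_max_of_le_right (by nlinarith)

namespace SimpleGraph

variable {V : Type*} {G : SimpleGraph V} {s t : Finset V}

-- `G[s]`, kept on the vertex type `V` so that its walks are walks between vertices of `V`.
def inducedOn (G : SimpleGraph V) (s : Finset V) : SimpleGraph V where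
  Adj a b := G.Adj a b ∧ a ∈ s ∧ b ∈ s
  symm := ⟨fun _ _ h => ⟨h.1.symm, h.2.2, h.2.1⟩⟩
  loopless := ⟨fun _ h => G.irrefl h.1⟩

lemma forall_reachable_or_exists_ssubset_forall_not_adj [DecidableEq V] :
    (∀ u ∈ s, ∀ v ∈ s, (G.inducedOn s).Reachable u v) ∨
      ∃ t ⊂ s, s \ t ⊂ s ∧ ∀ a ∈ t, ∀ b ∈ s \ t, ¬ G.Adj a b := by
  classical
  rcases s.eq_empty_or_nonempty with rfl | ⟨x, hx⟩
  · simp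
  let t := {v ∈ s | (G.inducedOn s).Reachable x v}
  have hxt : x ∈ t := Finset.mem_filter.2 ⟨hx, .refl x⟩
  by_cases hts : t = s
  · refine .inl fun u hu v hv => ?_
    rw [← hts] at hu hv
    exact (Finset.mem_filter.1 hu).2.symm.trans (Finset.mem_filter.1 hv).2
  refine .inr ⟨t, ?_, ?_, fun a ha b hb hab => ?_⟩
  · exact Finset.ssubset_iff_subset_ne.2 ⟨Finset.filter_subset _ _, hts⟩
  · exact Finset.sdiff_ssubset (Finset.filter_subset _ _) ⟨x, hxt⟩
  · obtain ⟨hbs, hbt⟩ := Finset.mem_sdiff.1 hb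
    obtain ⟨has, hxa⟩ := Finset.mem_filter.1 ha
    exact hbt (Finset.mem_filter.2 ⟨hbs, hxa.trans (Adj.reachable ⟨hab, has, hbs⟩)⟩)

variable [DecidableRel G.Adj] {m m' M N : Finset (Sym2 V)} {e f : Sym2 V} {u v z : V}

def edgesOn (G : SimpleGraph V) [DecidableRel G.Adj] (s : Finset V) : Finset (Sym2 V) :=
  {e ∈ s.sym2 | e ∈ G.edgeSet}

lemma mem_edgesOn : e ∈ G.edgesOn s ↔ e ∈ G.edgeSet ∧ ∀ v ∈ e, v ∈ s := by
  rw [edgesOn, Finset.mem_filter, Finset.mem_sym2_iff, and_comm]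

lemma edgesOn_mono (hst : s ⊆ t) : G.edgesOn s ⊆ G.edgesOn t := fun _ he =>
  mem_edgesOn.2 ⟨(mem_edgesOn.1 he).1, fun v hv => hst ((mem_edgesOn.1 he).2 v hv)⟩

lemma natCard_edgeSet_eq_card_edgesOn_univ [Fintype V] :
    Nat.card G.edgeSet = (G.edgesOn Finset.univ).card := by
  rw [Nat.card_coe_set_eq, ← Set.ncard_coe_finset]
  congr 1
  ext e
  simp [mem_edgesOn]

lemma disjoint_edgesOn (hst : Disjoint s t) : Disjoint (G.edgesOn s) (G.edgesOn t) := by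
  refine Finset.disjoint_left.2 fun e hs ht => ?_
  have hv := Sym2.out_fst_mem e
  exact Finset.disjoint_left.1 hst ((mem_edgesOn.1 hs).2 _ hv) ((mem_edgesOn.1 ht).2 _ hv)

structure IsMatchingOn (G : SimpleGraph V) [DecidableRel G.Adj] (s : Finset V)
    (m : Finset (Sym2 V)) : Prop where
  subset_edgesOn : m ⊆ G.edgesOn s
  eq_of_mem_of_mem : ∀ ⦃e⦄, e ∈ m → ∀ ⦃f⦄, f ∈ m → ∀ ⦃v⦄, v ∈ e → v ∈ f → e = f

lemma IsMatchingOn.empty : G.IsMatchingOn s ∅ := ⟨Finset.empty_subset _, by simp⟩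

lemma IsMatchingOn.mono (h : G.IsMatchingOn s m) (hst : s ⊆ t) : G.IsMatchingOn t m :=
  ⟨h.subset_edgesOn.trans (edgesOn_mono hst), h.eq_of_mem_of_mem⟩

lemma IsMatchingOn.subset (h : G.IsMatchingOn s m) (hm : m' ⊆ m) : G.IsMatchingOn s m' :=
  ⟨hm.trans h.subset_edgesOn, fun _ he _ hf => h.eq_of_mem_of_mem (hm he) (hm hf)⟩

open Classical in
noncomputable def matchingNumberOn (G : SimpleGraph V) [DecidableRel G.Adj] (s : Finset V) : ℕ :=
  {m ∈ (G.edgesOn s).powerset | G.IsMatchingOn s m}.sup Finset.card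

lemma IsMatchingOn.card_le_matchingNumberOn (h : G.IsMatchingOn s m) :
    m.card ≤ G.matchingNumberOn s := by
  classical
  exact Finset.le_sup (Finset.mem_filter.2 ⟨Finset.mem_powerset.2 h.subset_edgesOn, h⟩)

lemma exists_isMatchingOn_card_eq (G : SimpleGraph V) [DecidableRel G.Adj] (s : Finset V) :
    ∃ m, G.IsMatchingOn s m ∧ m.card = G.matchingNumberOn s := by
  classical
  obtain ⟨m, hm, hcard⟩ := Finset.exists_mem_eq_sup _
    ⟨∅, Finset.mem_filter.2 ⟨Finset.empty_mem_powerset _, IsMatchingOn.empty (G := G)⟩⟩ Finset.card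
  exact ⟨m, (Finset.mem_filter.1 hm).2, hcard.symm⟩

lemma matchingNumberOn_mono (hst : s ⊆ t) : G.matchingNumberOn s ≤ G.matchingNumberOn t := by
  obtain ⟨m, hm, hcard⟩ := exists_isMatchingOn_card_eq G s
  exact hcard ▸ (hm.mono hst).card_le_matchingNumberOn

variable [DecidableEq V]

lemma card_edgesOn_le_choose_two : (G.edgesOn s).card ≤ s.card.choose 2 := by
  rw [← Sym2.card_image_offDiag]
  refine Finset.card_le_card fun e he => ?_
  induction e with
  | _ a b =>
    obtain ⟨hab, hs⟩ := mem_edgesOn.1 he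
    exact Finset.mem_image.2 ⟨(a, b), Finset.mem_offDiag.2
      ⟨hs a (Sym2.mem_mk_left a b), hs b (Sym2.mem_mk_right a b), G.ne_of_adj hab⟩, rfl⟩

lemma edgesOn_subset_edgesOn_erase_union (v : V) :
    G.edgesOn s ⊆ G.edgesOn (s.erase v) ∪ (s.erase v).image (fun w => s(v, w)) := by
  intro e he
  obtain ⟨hadj, hs⟩ := mem_edgesOn.1 he
  by_cases hv : v ∈ e
  · obtain ⟨w, rfl⟩ := Sym2.mem_iff_exists.1 hv
    refine Finset.mem_union_right _ (Finset.mem_image.2 ⟨w, Finset.mem_erase.2 ⟨?_, ?_⟩, rfl⟩)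
    · exact (G.ne_of_adj hadj).symm
    · exact hs w (Sym2.mem_mk_right v w)
  · exact Finset.mem_union_left _ (mem_edgesOn.2
      ⟨hadj, fun w hw => Finset.mem_erase.2 ⟨fun h => hv (h ▸ hw), hs w hw⟩⟩)

lemma card_edgesOn_le_card_edgesOn_erase_add (hv : v ∈ s) :
    (G.edgesOn s).card ≤ (G.edgesOn (s.erase v)).card + (s.card - 1) := by
  rw [← Finset.card_erase_of_mem hv]
  calc (G.edgesOn s).card
      ≤ (G.edgesOn (s.erase v) ∪ (s.erase v).image (fun w => s(v, w))).card :=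
        Finset.card_le_card (edgesOn_subset_edgesOn_erase_union v)
    _ ≤ _ := (Finset.card_union_le _ _).trans (Nat.add_le_add_left Finset.card_image_le _)

lemma card_edgesOn_eq_add_of_forall_not_adj (hts : t ⊆ s)
    (hcross : ∀ a ∈ t, ∀ b ∈ s \ t, ¬ G.Adj a b) :
    (G.edgesOn s).card = (G.edgesOn t).card + (G.edgesOn (s \ t)).card := by
  rw [← Finset.card_union_of_disjoint (disjoint_edgesOn Finset.disjoint_sdiff)]
  congr 1
  ext e
  induction e with
  | _ a b =>
    simp only [Finset.mem_union, mem_edgesOn, mem_edgeSet, Sym2.mem_iff, forall_eq_or_imp,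
      forall_eq, Finset.mem_sdiff]
    constructor
    · rintro ⟨hab, ha, hb⟩
      by_cases hat : a ∈ t
      · exact .inl ⟨hab, hat,
          by_contra fun hbt => hcross a hat b (Finset.mem_sdiff.2 ⟨hb, hbt⟩) hab⟩
      · exact .inr ⟨hab, ⟨ha, hat⟩, hb,
          fun hbt => hcross b hbt a (Finset.mem_sdiff.2 ⟨ha, hat⟩) hab.symm⟩
    · rintro (⟨hab, ha, hb⟩ | ⟨hab, ⟨ha, -⟩, hb, -⟩)
      exacts [⟨hab, hts ha, hts hb⟩, ⟨hab, ha, hb⟩]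

def coveredVerts (m : Finset (Sym2 V)) : Finset V := m.biUnion Sym2.toFinset

lemma mem_coveredVerts : v ∈ coveredVerts m ↔ ∃ e ∈ m, v ∈ e := by
  simp [coveredVerts]

lemma notMem_of_forall_notMem_coveredVerts (hfree : ∀ v ∈ e, v ∉ coveredVerts m) : e ∉ m :=
  fun he => hfree _ (Sym2.out_fst_mem e) (mem_coveredVerts.2 ⟨e, he, Sym2.out_fst_mem e⟩)

namespace IsMatchingOn

lemma coveredVerts_subset (h : G.IsMatchingOn s m) : coveredVerts m ⊆ s := by
  intro v hv
  obtain ⟨e, he, hve⟩ := mem_coveredVerts.1 hv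
  exact (mem_edgesOn.1 (h.subset_edgesOn he)).2 v hve

lemma card_coveredVerts (h : G.IsMatchingOn s m) : (coveredVerts m).card = 2 * m.card := by
  rw [coveredVerts, Finset.card_biUnion, Finset.sum_const_nat, mul_comm]
  · intro e he
    exact Sym2.card_toFinset_of_not_isDiag e
      (G.not_isDiag_of_mem_edgeSet (mem_edgesOn.1 (h.subset_edgesOn he)).1)
  · intro e he f hf hef
    refine Finset.disjoint_left.2 fun v hve hvf => hef ?_
    exact h.eq_of_mem_of_mem he hf (Sym2.mem_toFinset.1 hve) (Sym2.mem_toFinset.1 hvf)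

lemma insert_of_forall_notMem_coveredVerts (h : G.IsMatchingOn s m) (he : e ∈ G.edgesOn s)
    (hfree : ∀ v ∈ e, v ∉ coveredVerts m) : G.IsMatchingOn s (insert e m) := by
  refine ⟨Finset.insert_subset he h.subset_edgesOn, ?_⟩
  simp only [Finset.mem_insert]
  rintro f₁ (rfl | hf₁) f₂ (rfl | hf₂) v hv₁ hv₂
  · rfl
  · exact absurd (mem_coveredVerts.2 ⟨f₂, hf₂, hv₂⟩) (hfree v hv₁)
  · exact absurd (mem_coveredVerts.2 ⟨f₁, hf₁, hv₁⟩) (hfree v hv₂)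
  · exact h.eq_of_mem_of_mem hf₁ hf₂ hv₁ hv₂

lemma union (h : G.IsMatchingOn s m) (h' : G.IsMatchingOn t m') (hst : Disjoint s t) :
    G.IsMatchingOn (s ∪ t) (m ∪ m') := by
  refine ⟨Finset.union_subset (h.mono Finset.subset_union_left).subset_edgesOn
    (h'.mono Finset.subset_union_right).subset_edgesOn, ?_⟩
  have hcov {e₁ e₂ v} (he₁ : e₁ ∈ m) (he₂ : e₂ ∈ m') (hv₁ : v ∈ e₁) (hv₂ : v ∈ e₂) : False :=
    Finset.disjoint_left.1 hst (h.coveredVerts_subset (mem_coveredVerts.2 ⟨e₁, he₁, hv₁⟩))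
      (h'.coveredVerts_subset (mem_coveredVerts.2 ⟨e₂, he₂, hv₂⟩))
  simp only [Finset.mem_union]
  rintro e₁ (he₁ | he₁) e₂ (he₂ | he₂) v hv₁ hv₂
  · exact h.eq_of_mem_of_mem he₁ he₂ hv₁ hv₂
  · exact (hcov he₁ he₂ hv₁ hv₂).elim
  · exact (hcov he₂ he₁ hv₂ hv₁).elim
  · exact h'.eq_of_mem_of_mem he₁ he₂ hv₁ hv₂

lemma insert_erase (h : G.IsMatchingOn s m) (hf : f ∈ m) (hvf : v ∈ f) (hadj : G.Adj u v)
    (hu : u ∈ s) (hum : u ∉ coveredVerts m) :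
    G.IsMatchingOn s (insert s(u, v) (m.erase f)) ∧ (insert s(u, v) (m.erase f)).card = m.card := by
  have hv : v ∈ s := h.coveredVerts_subset (mem_coveredVerts.2 ⟨f, hf, hvf⟩)
  have hfree : ∀ x ∈ s(u, v), x ∉ coveredVerts (m.erase f) := by
    simp only [Sym2.mem_iff, forall_eq_or_imp, forall_eq, mem_coveredVerts, Finset.mem_erase]
    constructor
    · rintro ⟨g, ⟨-, hg⟩, hug⟩
      exact hum (mem_coveredVerts.2 ⟨g, hg, hug⟩)
    · rintro ⟨g, ⟨hgf, hg⟩, hvg⟩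
      exact hgf (h.eq_of_mem_of_mem hg hf hvg hvf)
  refine ⟨(h.subset (m.erase_subset f)).insert_of_forall_notMem_coveredVerts ?_ hfree, ?_⟩
  · exact mem_edgesOn.2 ⟨hadj, by simp [hu, hv]⟩
  · rw [Finset.card_insert_of_notMem (notMem_of_forall_notMem_coveredVerts hfree),
      Finset.card_erase_add_one hf]

lemma not_adj_of_card_eq (hM : G.IsMatchingOn s M) (hMk : M.card = G.matchingNumberOn s)
    (hu : u ∈ s) (hv : v ∈ s) (huM : u ∉ coveredVerts M) (hvM : v ∉ coveredVerts M) :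
    ¬ G.Adj u v := by
  intro huv
  have hfree : ∀ x ∈ s(u, v), x ∉ coveredVerts M := by simp [huM, hvM]
  have := (hM.insert_of_forall_notMem_coveredVerts (mem_edgesOn.2 ⟨huv, by simp [hu, hv]⟩)
    hfree).card_le_matchingNumberOn
  rw [Finset.card_insert_of_notMem (notMem_of_forall_notMem_coveredVerts hfree)] at this
  omega

lemma exists_card_inter_lt (hM : G.IsMatchingOn s M) (hMk : M.card = G.matchingNumberOn s)
    (hN : G.IsMatchingOn (s.erase z) N) (hNk : N.card = G.matchingNumberOn s)
    (hu : u ∈ s) (hv : v ∈ s) (huv : u ≠ v) (huM : u ∉ coveredVerts M) (hvM : v ∉ coveredVerts M)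
    (huN : u ∈ coveredVerts N) (hvN : v ∈ coveredVerts N) :
    ∃ N', G.IsMatchingOn (s.erase z) N' ∧ N'.card = G.matchingNumberOn s ∧
      (N ∩ M).card < (N' ∩ M).card := by
  have hNs := hN.mono (s.erase_subset z)
  have hexposed : (s \ coveredVerts M).card = (s \ coveredVerts N).card := by
    rw [Finset.card_sdiff_of_subset hM.coveredVerts_subset,
      Finset.card_sdiff_of_subset hNs.coveredVerts_subset, hM.card_coveredVerts,
      hNs.card_coveredVerts, hMk, hNk]
  have htwo : 1 < ((s \ coveredVerts N) \ (s \ coveredVerts M)).card := by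
    rw [Finset.card_sdiff_comm hexposed.symm]
    exact Finset.one_lt_card.2 ⟨u, by simp [hu, huM, huN], v, by simp [hv, hvM, hvN], huv⟩
  obtain ⟨w, hw, hwz⟩ := Finset.exists_mem_ne htwo z
  simp only [Finset.mem_sdiff, not_and, not_not] at hw
  obtain ⟨⟨hws, hwN⟩, hwM⟩ := hw
  obtain ⟨e, heM, hwe⟩ := mem_coveredVerts.1 (hwM hws)
  obtain ⟨y, rfl⟩ := Sym2.mem_iff_exists.1 hwe
  have hadj : G.Adj w y := (mem_edgesOn.1 (hM.subset_edgesOn heM)).1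
  have hyN : y ∈ coveredVerts N := by
    by_contra hyN
    exact hNs.not_adj_of_card_eq hNk hws
      ((mem_edgesOn.1 (hM.subset_edgesOn heM)).2 y (Sym2.mem_mk_right w y)) hwN hyN hadj
  obtain ⟨f, hfN, hyf⟩ := mem_coveredVerts.1 hyN
  obtain ⟨hN', hN'k⟩ := hN.insert_erase hfN hyf hadj (Finset.mem_erase.2 ⟨hwz, hws⟩) hwN
  refine ⟨_, hN', hN'k.trans hNk, Finset.card_lt_card ?_⟩
  have hfM : f ∉ M := fun hfM =>
    hwN (mem_coveredVerts.2 ⟨f, hfN, hM.eq_of_mem_of_mem heM hfM (Sym2.mem_mk_right w y) hyf ▸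
      Sym2.mem_mk_left w y⟩)
  refine Finset.ssubset_iff_of_subset ?_ |>.2 ⟨s(w, y), ?_, ?_⟩
  · intro g hg
    obtain ⟨hgN, hgM⟩ := Finset.mem_inter.1 hg
    exact Finset.mem_inter.2 ⟨Finset.mem_insert_of_mem
      (Finset.mem_erase.2 ⟨fun hgf => hfM (hgf ▸ hgM), hgN⟩), hgM⟩
  · exact Finset.mem_inter.2 ⟨Finset.mem_insert_self _ _, heM⟩
  · exact fun h => hwN (mem_coveredVerts.2 ⟨_, (Finset.mem_inter.1 h).1, Sym2.mem_mk_left w y⟩)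

lemma exists_erase_notMem_or_notMem (hM : G.IsMatchingOn s M)
    (hMk : M.card = G.matchingNumberOn s)
    (hz : G.matchingNumberOn (s.erase z) = G.matchingNumberOn s)
    (hu : u ∈ s) (hv : v ∈ s) (huv : u ≠ v) (huM : u ∉ coveredVerts M)
    (hvM : v ∉ coveredVerts M) :
    ∃ N, G.IsMatchingOn (s.erase z) N ∧ N.card = G.matchingNumberOn s ∧
      (u ∉ coveredVerts N ∨ v ∉ coveredVerts N) := by
  classical
  obtain ⟨N₀, hN₀, hN₀k⟩ := exists_isMatchingOn_card_eq G (s.erase z)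
  let candidates := {N ∈ (G.edgesOn (s.erase z)).powerset |
    G.IsMatchingOn (s.erase z) N ∧ N.card = G.matchingNumberOn s}
  have mem_candidates {N} (hN : G.IsMatchingOn (s.erase z) N)
      (hNk : N.card = G.matchingNumberOn s) : N ∈ candidates :=
    Finset.mem_filter.2 ⟨Finset.mem_powerset.2 hN.subset_edgesOn, hN, hNk⟩
  obtain ⟨N, hNc, hmax⟩ := Finset.exists_max_image candidates (fun N => (N ∩ M).card)
    ⟨N₀, mem_candidates hN₀ (hN₀k.trans hz)⟩
  obtain ⟨hN, hNk⟩ := (Finset.mem_filter.1 hNc).2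
  refine ⟨N, hN, hNk, ?_⟩
  by_contra! hcov
  obtain ⟨N', hN', hN'k, hlt⟩ :=
    hM.exists_card_inter_lt hMk hN hNk hu hv huv huM hvM hcov.1 hcov.2
  exact (hmax N' (mem_candidates hN' hN'k)).not_gt hlt

lemma not_reachable (hM : G.IsMatchingOn s M) (hMk : M.card = G.matchingNumberOn s)
    (havoid : ∀ z ∈ s, G.matchingNumberOn (s.erase z) = G.matchingNumberOn s)
    (hu : u ∈ s) (hv : v ∈ s) (huv : u ≠ v) (huM : u ∉ coveredVerts M)
    (hvM : v ∉ coveredVerts M) :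
    ¬ (G.inducedOn s).Reachable u v := by
  rintro ⟨p⟩
  -- Induction along the walk plays the role of choosing `u`, `v` at minimal distance.
  induction p generalizing M with
  | nil => exact huv rfl
  | @cons u z v hadj q ih =>
    obtain ⟨hadj, -, hz⟩ := hadj
    by_cases hzv : z = v
    · subst hzv
      exact hM.not_adj_of_card_eq hMk hu hv huM hvM hadj
    have hzN {N} (hN : G.IsMatchingOn (s.erase z) N) : z ∉ coveredVerts N :=
      fun h => s.notMem_erase z (hN.coveredVerts_subset h)
    obtain ⟨N, hN, hNk, huN | hvN⟩ :=
      hM.exists_erase_notMem_or_notMem hMk (havoid z hz) hu hv huv huM hvM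
    · exact (hN.mono (s.erase_subset z)).not_adj_of_card_eq hNk hu hz huN (hzN hN) hadj
    · exact ih (hN.mono (s.erase_subset z)) hNk hz hv hzv (hzN hN) hvN

end IsMatchingOn

lemma two_mul_matchingNumberOn_le_card : 2 * G.matchingNumberOn s ≤ s.card := by
  obtain ⟨m, hm, hcard⟩ := exists_isMatchingOn_card_eq G s
  rw [← hcard, ← hm.card_coveredVerts]
  exact Finset.card_le_card hm.coveredVerts_subset

lemma matchingNumberOn_add_le (hst : Disjoint s t) :
    G.matchingNumberOn s + G.matchingNumberOn t ≤ G.matchingNumberOn (s ∪ t) := by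
  obtain ⟨m, hm, hcard⟩ := exists_isMatchingOn_card_eq G s
  obtain ⟨m', hm', hcard'⟩ := exists_isMatchingOn_card_eq G t
  rw [← hcard, ← hcard', ← Finset.card_union_of_disjoint
    ((disjoint_edgesOn hst).mono hm.subset_edgesOn hm'.subset_edgesOn)]
  exact (hm.union hm' hst).card_le_matchingNumberOn

theorem card_le_two_mul_matchingNumberOn_add_one
    (hconn : ∀ u ∈ s, ∀ v ∈ s, (G.inducedOn s).Reachable u v)
    (havoid : ∀ z ∈ s, G.matchingNumberOn (s.erase z) = G.matchingNumberOn s) :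
    s.card ≤ 2 * G.matchingNumberOn s + 1 := by
  obtain ⟨M, hM, hMk⟩ := exists_isMatchingOn_card_eq G s
  by_contra! hs
  have hexposed : 1 < (s \ coveredVerts M).card := by
    rw [Finset.card_sdiff_of_subset hM.coveredVerts_subset, hM.card_coveredVerts]
    omega
  obtain ⟨u, hu, v, hv, huv⟩ := Finset.one_lt_card.1 hexposed
  rw [Finset.mem_sdiff] at hu hv
  exact hM.not_reachable hMk havoid hu.1 hv.1 huv hu.2 hv.2 (hconn u hu.1 v hv.1)

lemma card_edgesOn_le_of_matchingNumberOn_erase_lt (hv : v ∈ s)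
    (hlt : G.matchingNumberOn (s.erase v) < G.matchingNumberOn s)
    (hs : 2 * G.matchingNumberOn s + 1 < s.card)
    (ih : (G.edgesOn (s.erase v)).card ≤
      erdosGallaiBound (s.erase v).card (G.matchingNumberOn (s.erase v))) :
    (G.edgesOn s).card ≤ erdosGallaiBound s.card (G.matchingNumberOn s) := by
  set k := G.matchingNumberOn s
  rw [Finset.card_erase_of_mem hv] at ih
  have hstep := erdosGallaiBound_add_le_succ (n := s.card - 1) (k := k - 1) (by omega)
  rw [Nat.sub_add_cancel (by omega), Nat.sub_add_cancel (by omega)] at hstep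
  calc (G.edgesOn s).card ≤ (G.edgesOn (s.erase v)).card + (s.card - 1) :=
        card_edgesOn_le_card_edgesOn_erase_add hv
    _ ≤ erdosGallaiBound (s.card - 1) (k - 1) + (s.card - 1) := by
        gcongr
        exact ih.trans (erdosGallaiBound_mono (by omega) (by omega))
    _ ≤ erdosGallaiBound s.card k := hstep

lemma card_edgesOn_le_of_forall_not_adj (hts : t ⊆ s)
    (hcross : ∀ a ∈ t, ∀ b ∈ s \ t, ¬ G.Adj a b)
    (iht : (G.edgesOn t).card ≤ erdosGallaiBound t.card (G.matchingNumberOn t))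
    (ihst : (G.edgesOn (s \ t)).card ≤
      erdosGallaiBound (s \ t).card (G.matchingNumberOn (s \ t))) :
    (G.edgesOn s).card ≤ erdosGallaiBound s.card (G.matchingNumberOn s) := by
  have hν : G.matchingNumberOn t + G.matchingNumberOn (s \ t) ≤ G.matchingNumberOn s := by
    simpa [Finset.union_sdiff_of_subset hts] using
      matchingNumberOn_add_le (G := G) (Finset.disjoint_sdiff (s := t) (t := s))
  calc (G.edgesOn s).card = (G.edgesOn t).card + (G.edgesOn (s \ t)).card :=
        card_edgesOn_eq_add_of_forall_not_adj hts hcross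
    _ ≤ erdosGallaiBound t.card (G.matchingNumberOn t) +
          erdosGallaiBound (s \ t).card (G.matchingNumberOn (s \ t)) := add_le_add iht ihst
    _ ≤ erdosGallaiBound (t.card + (s \ t).card)
          (G.matchingNumberOn t + G.matchingNumberOn (s \ t)) :=
        erdosGallaiBound_add_le two_mul_matchingNumberOn_le_card
          two_mul_matchingNumberOn_le_card
    _ ≤ erdosGallaiBound s.card (G.matchingNumberOn s) := by
        rw [add_comm, Finset.card_sdiff_add_card_eq_card hts]
        exact erdosGallaiBound_mono hν two_mul_matchingNumberOn_le_card

theorem card_edgesOn_le_erdosGallaiBound (s : Finset V) :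
    (G.edgesOn s).card ≤ erdosGallaiBound s.card (G.matchingNumberOn s) := by
  induction s using Finset.strongInduction with
  | H s ih =>
  by_cases hsmall : s.card ≤ 2 * G.matchingNumberOn s + 1
  · exact card_edgesOn_le_choose_two.trans
      ((Nat.choose_le_choose 2 hsmall).trans (le_max_left _ _))
  by_cases hcrit : ∃ v ∈ s, G.matchingNumberOn (s.erase v) < G.matchingNumberOn s
  · obtain ⟨v, hv, hlt⟩ := hcrit
    exact card_edgesOn_le_of_matchingNumberOn_erase_lt hv hlt (by omega)
      (ih _ (Finset.erase_ssubset hv))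
  simp only [not_exists, not_and, not_lt] at hcrit
  rcases forall_reachable_or_exists_ssubset_forall_not_adj (G := G) (s := s) with
    hconn | ⟨t, hts, hsts, hcross⟩
  · exact absurd (card_le_two_mul_matchingNumberOn_add_one hconn fun v hv =>
      (matchingNumberOn_mono (s.erase_subset v)).antisymm (hcrit v hv)) hsmall
  · exact card_edgesOn_le_of_forall_not_adj hts.subset hcross (ih t hts) (ih _ hsts)

lemma matchingNumberOn_univ_le_matchNum [Fintype V] :
    G.matchingNumberOn Finset.univ ≤ matchNum G := by
  obtain ⟨m, h, hcard⟩ := exists_isMatchingOn_card_eq G Finset.univ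
  let M : G.Subgraph :=
    { verts := coveredVerts m
      Adj a b := s(a, b) ∈ m
      adj_sub hab := (mem_edgesOn.1 (h.subset_edgesOn hab)).1
      edge_vert hab := mem_coveredVerts.2 ⟨_, hab, Sym2.mem_mk_left _ _⟩
      symm := ⟨fun a b hab => Sym2.eq_swap (a := a) ▸ hab⟩ }
  have hM : M.IsMatching := by
    intro v hv
    obtain ⟨e, he, hve⟩ := mem_coveredVerts.1 hv
    obtain ⟨w, rfl⟩ := Sym2.mem_iff_exists.1 hve
    exact ⟨w, he, fun y hy => Sym2.congr_right.1
      (h.eq_of_mem_of_mem hy he (Sym2.mem_mk_left v y) (Sym2.mem_mk_left v w))⟩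
  have hMcard : M.edgeSet.ncard = m.card := by
    rw [show M.edgeSet = m from Set.ext (Sym2.ind fun _ _ => Iff.rfl), Set.ncard_coe_finset]
  rw [← hcard]
  refine le_csSup ⟨Nat.card (Sym2 V), ?_⟩ ⟨M, hM, hMcard⟩
  rintro _ ⟨M', -, rfl⟩
  exact Set.ncard_le_card _

end SimpleGraph

theorem erdos_gallai_matching {V : Type*} [Fintype V] (G : SimpleGraph V)
    (n : ℕ) (hn : n = Fintype.card V) (β : ℕ) (hβ : β = matchNum G) (h : n > 2 * β) :
    Nat.card G.edgeSet ≤ max ((2 * β + 1).choose 2) (β.choose 2 + β * (n - β)) := by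
  classical
  calc Nat.card G.edgeSet = (G.edgesOn Finset.univ).card := natCard_edgeSet_eq_card_edgesOn_univ
    _ ≤ erdosGallaiBound n (G.matchingNumberOn Finset.univ) :=
        hn ▸ card_edgesOn_le_erdosGallaiBound Finset.univ
    _ ≤ erdosGallaiBound n β :=
        erdosGallaiBound_mono (hβ ▸ matchingNumberOn_univ_le_matchNum) (by omega)
end

section
/- Let G be a connected simple graph on an even number n of vertices, where n ≥ 10 or n = 4. If the number of edges of G exceeds C(n−2, 2) + 2, then G has a perfect matching. -/
/-!
If `G` has no perfect matching, enlarge it to a maximal graph `Gm ≥ G` without one. Adding a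
missing edge `xy` to `Gm` creates a perfect matching, which must use `xy`; switching along an
alternating 4-cycle shows that `N(x)` and the partners of `N(y)` are disjoint, so
`deg x + deg y ≤ n - 2`. In the complement `H = Gmᶜ` this reads `n ≤ deg_H x + deg_H y` for
every edge `xy`, and connectivity of `G` bounds the degrees of `H` by `n - 2`. Counting the
edges at the vertices of `H` of degree at least `n / 2` forces `2n - 5 ≤ |E(H)|`, that is
`|E(G)| ≤ |E(Gm)| ≤ C(n, 2) - (2n - 5) = C(n - 2, 2) + 2`.
-/

open Finset Function

theorem Nat.choose_two_eq_sub_two_choose_two_add {n : ℕ} (hn : 2 ≤ n) :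
    n.choose 2 = (n - 2).choose 2 + (2 * n - 3) := by
  obtain ⟨m, rfl⟩ := Nat.exists_eq_add_of_le' hn
  simp [Nat.choose_succ_succ', Nat.choose_one_right]
  omega

namespace SimpleGraph

variable {V : Type*} {G : SimpleGraph V}

theorem exists_isPerfectMatching_iff_exists_involutive_adj :
    (∃ M : G.Subgraph, M.IsPerfectMatching) ↔
      ∃ f : V → V, Involutive f ∧ ∀ v, G.Adj v (f v) := by
  constructor
  · rintro ⟨M, hM⟩
    choose f hf huniq using Subgraph.isPerfectMatching_iff.mp hM
    exact ⟨f, fun v => (huniq _ v (hf v).symm).symm, fun v => M.adj_sub (hf v)⟩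
  · rintro ⟨f, hf, hadj⟩
    let M : G.Subgraph :=
      { verts := Set.univ
        Adj := fun v w => f v = w
        adj_sub := fun h => h ▸ hadj _
        edge_vert := fun _ => trivial
        symm := ⟨fun v w h => by rw [← h, hf]⟩ }
    exact ⟨M, Subgraph.isPerfectMatching_iff.mpr fun v => ⟨f v, rfl, fun _ h => Eq.symm h⟩⟩

theorem exists_isPerfectMatching_top [Finite V] (h : Even (Nat.card V)) :
    ∃ M : (⊤ : SimpleGraph V).Subgraph, M.IsPerfectMatching := by
  obtain ⟨M, hverts, hM⟩ := (IsClique.top (s := Set.univ)).even_iff_exists_isMatching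
    Set.finite_univ |>.mp (by rwa [Set.ncard_univ])
  exact ⟨M, hM, fun v => hverts ▸ Set.mem_univ v⟩

theorem exists_involutive_adj_of_alternating_square {f : V → V} (hf : Involutive f)
    {x y v w : V} (hxy : x ≠ y) (hnadj : ¬G.Adj x y) (hfx : f x = y) (hfv : f v = w)
    (hxv : G.Adj x v) (hyw : G.Adj y w) (hG : ∀ z, z ≠ x → z ≠ y → G.Adj z (f z)) :
    ∃ g : V → V, Involutive g ∧ ∀ z, G.Adj z (g z) := by
  classical
  have hfy : f y = x := hfx ▸ hf x
  have hfw : f w = v := hfv ▸ hf v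
  have hvx : v ≠ x := hxv.ne'
  have hvy : v ≠ y := by rintro rfl; exact hnadj hxv
  have hwy : w ≠ y := hyw.ne'
  have hvw : v ≠ w := hfv ▸ (hG v hvx hvy).ne
  have hσx : Equiv.swap y v x = x := Equiv.swap_apply_of_ne_of_ne hxy hvx.symm
  have hσw : Equiv.swap y v w = w := Equiv.swap_apply_of_ne_of_ne hwy hvw.symm
  -- conjugating by the transposition `(y v)` turns the pairs `{x, y}, {v, w}` into `{x, v}, {y, w}`
  refine ⟨Equiv.swap y v ∘ f ∘ Equiv.swap y v, fun z => by simp [hf _], fun z => ?_⟩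
  simp only [comp_apply]
  by_cases hzx : z = x
  · rw [hzx, hσx, hfx, Equiv.swap_apply_left]; exact hxv
  by_cases hzy : z = y
  · rw [hzy, Equiv.swap_apply_left, hfv, hσw]; exact hyw
  by_cases hzv : z = v
  · rw [hzv, Equiv.swap_apply_right, hfy, hσx]; exact hxv.symm
  by_cases hzw : z = w
  · rw [hzw, hσw, hfw, Equiv.swap_apply_right]; exact hyw.symm
  have hfzy : f z ≠ y := fun h => hzx (by rw [← hfy, ← h, hf])
  have hfzv : f z ≠ v := fun h => hzw (by rw [← hfv, ← h, hf])
  rw [Equiv.swap_apply_of_ne_of_ne hzy hzv, Equiv.swap_apply_of_ne_of_ne hfzy hfzv]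
  exact hG z hzx hzy

theorem IsMatchingFree.degree_add_degree_add_two_le [Fintype V] [DecidableRel G.Adj]
    (hfree : G.IsMatchingFree) (hmax : ∀ G', G < G' → ∃ M : G'.Subgraph, M.IsPerfectMatching)
    {x y : V} (hxy : x ≠ y) (hnadj : ¬G.Adj x y) :
    G.degree x + G.degree y + 2 ≤ Fintype.card V := by
  classical
  have hno : ¬∃ f : V → V, Involutive f ∧ ∀ v, G.Adj v (f v) := fun h =>
    let ⟨M, hM⟩ := exists_isPerfectMatching_iff_exists_involutive_adj.mpr h
    hfree M hM
  obtain ⟨f, hf, hadj⟩ :=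
    exists_isPerfectMatching_iff_exists_involutive_adj.mp (hmax _ (G.lt_sup_edge x y hxy hnadj))
  have hG : ∀ z, z ≠ x → z ≠ y → G.Adj z (f z) := fun z hzx hzy =>
    (hadj z).resolve_right fun h => by rw [edge_adj] at h; tauto
  have hfx : f x = y := by
    by_contra hfx
    refine hno ⟨f, hf, fun z => (hadj z).resolve_right ?_⟩
    rw [edge_adj]
    rintro ⟨⟨rfl, h⟩ | ⟨rfl, h⟩, -⟩
    · exact hfx h
    · exact hfx (by rw [← h, hf])
  have hdisj : Disjoint (G.neighborFinset x) ((G.neighborFinset y).image f) := by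
    refine Finset.disjoint_left.mpr fun v hxv hv => ?_
    obtain ⟨w, hyw, rfl⟩ := mem_image.mp hv
    rw [mem_neighborFinset] at hxv hyw
    exact hno (exists_involutive_adj_of_alternating_square hf hxy hnadj hfx (hf w) hxv hyw hG)
  have hsub : G.neighborFinset x ∪ (G.neighborFinset y).image f ⊆ {x, y}ᶜ := by
    intro v hv
    simp only [mem_union, mem_neighborFinset, mem_image, mem_compl, mem_insert,
      mem_singleton] at hv ⊢
    rcases hv with hxv | ⟨w, hyw, rfl⟩
    · exact not_or.mpr ⟨hxv.ne', fun h => hnadj (h ▸ hxv)⟩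
    · refine not_or.mpr ⟨fun h => hyw.ne' ?_, fun h => hnadj ?_⟩
      · rw [← hf w, h, hfx]
      · have hwx : w = x := by rw [← hf w, h, ← hfx, hf]
        exact hwx ▸ hyw.symm
  calc G.degree x + G.degree y + 2
      = #(G.neighborFinset x ∪ (G.neighborFinset y).image f) + #{x, y} := by
        rw [card_union_of_disjoint hdisj, card_image_of_injective _ hf.injective, card_pair hxy]
        rfl
    _ ≤ #({x, y}ᶜ) + #{x, y} := by gcongr
    _ = Fintype.card V := card_compl_add_card _

section

variable [Fintype V] [DecidableRel G.Adj]

theorem two_mul_sum_degree_le (s : Finset V) :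
    2 * ∑ v ∈ s, G.degree v ≤ 2 * #G.edgeFinset + #s * (#s - 1) := by
  classical
  have hinside : ∑ v ∈ s, #(G.neighborFinset v ∩ s) ≤ #s * (#s - 1) := by
    calc ∑ v ∈ s, #(G.neighborFinset v ∩ s) ≤ ∑ _v ∈ s, (#s - 1) := by
          refine sum_le_sum fun v hv => ?_
          rw [← card_erase_of_mem hv]
          refine card_le_card fun w hw => ?_
          rw [mem_inter, mem_neighborFinset] at hw
          exact mem_erase.mpr ⟨hw.1.ne', hw.2⟩
      _ = #s * (#s - 1) := by rw [sum_const, smul_eq_mul]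
  have houtside : ∑ v ∈ s, #(G.neighborFinset v \ s) ≤ ∑ w ∈ sᶜ, G.degree w := by
    calc ∑ v ∈ s, #(G.neighborFinset v \ s) = ∑ v ∈ s, #(sᶜ.bipartiteAbove G.Adj v) := by
          congr! 2 with v; ext w; simp [bipartiteAbove, and_comm]
      _ = ∑ w ∈ sᶜ, #(s.bipartiteBelow G.Adj w) :=
          sum_card_bipartiteAbove_eq_sum_card_bipartiteBelow _
      _ ≤ ∑ w ∈ sᶜ, G.degree w := sum_le_sum fun w _ => card_le_card fun v hv => by
          simpa [bipartiteBelow, adj_comm] using (mem_filter.mp hv).2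
  have hsplit : ∑ v ∈ s, G.degree v =
      ∑ v ∈ s, #(G.neighborFinset v ∩ s) + ∑ v ∈ s, #(G.neighborFinset v \ s) := by
    rw [← sum_add_distrib]
    exact sum_congr rfl fun v _ => (card_inter_add_card_sdiff _ _).symm
  have htotal := sum_add_sum_compl s fun v => G.degree v
  rw [sum_degrees_eq_twice_card_edges] at htotal
  omega

def hubs : Finset V := {v | Fintype.card V ≤ 2 * G.degree v}

theorem mem_hubs {v : V} : v ∈ G.hubs ↔ Fintype.card V ≤ 2 * G.degree v := by
  simp [hubs]

theorem hubs_nonempty (hedge : ∀ x y, G.Adj x y → Fintype.card V ≤ G.degree x + G.degree y)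
    (hne : G ≠ ⊥) : G.hubs.Nonempty := by
  obtain ⟨x, y, hxy⟩ : ∃ x y, G.Adj x y := by
    by_contra! h
    exact hne (eq_bot_iff_forall_not_adj.mpr h)
  have := hedge x y hxy
  rcases le_total (G.degree x) (G.degree y) with h | h
  · exact ⟨y, mem_hubs.mpr (by omega)⟩
  · exact ⟨x, mem_hubs.mpr (by omega)⟩

/-- When at most half of the vertices are hubs, a hub `x` has a neighbour `z` outside the hubs;
all neighbours of `z` are hubs, so `deg z ≤ #hubs`, and the edge `xz` gives the bound. -/
theorem card_sub_card_hubs_le_degree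
    (hedge : ∀ x y, G.Adj x y → Fintype.card V ≤ G.degree x + G.degree y)
    (hsmall : 2 * #G.hubs ≤ Fintype.card V) {x : V} (hx : x ∈ G.hubs) :
    Fintype.card V - #G.hubs ≤ G.degree x := by
  classical
  obtain ⟨z, hxz, hz⟩ : ∃ z, G.Adj x z ∧ z ∉ G.hubs := by
    by_contra! h
    have : G.degree x ≤ #G.hubs - 1 := by
      rw [← card_erase_of_mem hx, ← card_neighborFinset_eq_degree]
      refine card_le_card fun w hw => ?_
      rw [mem_neighborFinset] at hw
      exact mem_erase.mpr ⟨hw.ne', h w hw⟩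
    have := mem_hubs.mp hx
    have := card_pos.mpr ⟨x, hx⟩
    omega
  have hzdeg : G.degree z ≤ #G.hubs := by
    rw [← card_neighborFinset_eq_degree]
    refine card_le_card fun w hw => ?_
    have := hedge z w ((mem_neighborFinset _ _ _).mp hw)
    rw [mem_hubs] at hz ⊢
    omega
  have := hedge x z hxz
  omega

theorem two_mul_card_sub_five_le_card_edgeFinset_of_two_mul_card_hubs_le
    (hn : 10 ≤ Fintype.card V ∨ Fintype.card V = 4)
    (hdeg : ∀ v, G.degree v + 2 ≤ Fintype.card V)
    (hedge : ∀ x y, G.Adj x y → Fintype.card V ≤ G.degree x + G.degree y) (hne : G ≠ ⊥)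
    (hsmall : 2 * #G.hubs ≤ Fintype.card V) :
    2 * Fintype.card V - 5 ≤ #G.edgeFinset := by
  obtain ⟨x, hx⟩ := G.hubs_nonempty hedge hne
  have hk : 2 ≤ #G.hubs := by
    have := card_sub_card_hubs_le_degree hedge hsmall hx
    have := hdeg x
    omega
  have hsum : #G.hubs * (Fintype.card V - #G.hubs) ≤ ∑ v ∈ G.hubs, G.degree v := by
    rw [← smul_eq_mul]
    exact card_nsmul_le_sum _ _ _ fun v hv => card_sub_card_hubs_le_degree hedge hsmall hv
  have hcount := G.two_mul_sum_degree_le G.hubs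
  set n := Fintype.card V
  set k := #G.hubs
  -- `(k - 2) * (2 * n - 5 - 3 * k) ≥ 0`, expanded
  have hkey : 4 * n + 3 * (k * k) ≤ 2 * (n * k) + k + 10 := by
    rcases hn with hn | hn
    · have h1 : (0 : ℤ) ≤ k - 2 := by omega
      have h2 : (0 : ℤ) ≤ 2 * n - 5 - 3 * k := by omega
      zify
      nlinarith [mul_nonneg h1 h2]
    · have hk2 : k = 2 := by omega
      rw [hk2, hn]
  have : k * k ≤ n * k := Nat.mul_le_mul_right k (by omega)
  rw [Nat.mul_sub, Nat.mul_comm k n] at hsum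
  rw [Nat.mul_sub, mul_one] at hcount
  have : k ≤ k * k := Nat.le_mul_self k
  omega

theorem two_mul_card_sub_five_le_card_edgeFinset_of_card_lt_two_mul_card_hubs
    (heven : Even (Fintype.card V)) (hn : 10 ≤ Fintype.card V ∨ Fintype.card V = 4)
    (hbig : Fintype.card V < 2 * #G.hubs) :
    2 * Fintype.card V - 5 ≤ #G.edgeFinset := by
  have hsum : #G.hubs * Fintype.card V ≤ 4 * #G.edgeFinset :=
    calc #G.hubs * Fintype.card V ≤ ∑ v ∈ G.hubs, 2 * G.degree v := by
          rw [← smul_eq_mul]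
          exact card_nsmul_le_sum _ _ _ fun v hv => mem_hubs.mp hv
      _ ≤ ∑ v, 2 * G.degree v := sum_le_sum_of_subset (subset_univ _)
      _ = 4 * #G.edgeFinset := by
          rw [← mul_sum, sum_degrees_eq_twice_card_edges]
          ring
  set n := Fintype.card V
  have hbig' : n + 2 ≤ 2 * #G.hubs := by
    obtain ⟨t, ht⟩ := heven
    omega
  have : (n + 2) * n ≤ 8 * #G.edgeFinset := by nlinarith
  by_contra hlt
  rcases hn with hn | hn
  · have : 8 * #G.edgeFinset + 48 ≤ 16 * n := by omega
    nlinarith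
  · rw [hn] at this
    omega

theorem two_mul_card_sub_five_le_card_edgeFinset
    (heven : Even (Fintype.card V)) (hn : 10 ≤ Fintype.card V ∨ Fintype.card V = 4)
    (hdeg : ∀ v, G.degree v + 2 ≤ Fintype.card V)
    (hedge : ∀ x y, G.Adj x y → Fintype.card V ≤ G.degree x + G.degree y) (hne : G ≠ ⊥) :
    2 * Fintype.card V - 5 ≤ #G.edgeFinset := by
  rcases le_or_gt (2 * #G.hubs) (Fintype.card V) with hsmall | hbig
  · exact
      two_mul_card_sub_five_le_card_edgeFinset_of_two_mul_card_hubs_le hn hdeg hedge hne hsmall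
  · exact two_mul_card_sub_five_le_card_edgeFinset_of_card_lt_two_mul_card_hubs heven hn hbig

theorem card_edgeFinset_add_card_edgeFinset_compl [DecidableEq V] :
    #G.edgeFinset + #Gᶜ.edgeFinset = (Fintype.card V).choose 2 := by
  rw [← card_union_of_disjoint (disjoint_edgeFinset.mpr disjoint_compl_right), ← edgeFinset_sup,
    ← card_edgeFinset_top_eq_card_choose_two]
  congr! 2
  exact sup_compl_eq_top

theorem IsMatchingFree.card_le_degree_compl_add_degree_compl [DecidableEq V]
    (hfree : G.IsMatchingFree) (hmax : ∀ G', G < G' → ∃ M : G'.Subgraph, M.IsPerfectMatching)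
    {x y : V} (hxy : Gᶜ.Adj x y) :
    Fintype.card V ≤ Gᶜ.degree x + Gᶜ.degree y := by
  have := hfree.degree_add_degree_add_two_le hmax hxy.ne (compl_adj G x y |>.mp hxy).2
  rw [degree_compl, degree_compl]
  have := G.degree_lt_card_verts x
  have := G.degree_lt_card_verts y
  omega

end

end SimpleGraph

open SimpleGraph

theorem o_edge_condition_perfect_matching {V : Type*} [Fintype V] (G : SimpleGraph V)
    (n : ℕ) (hn : n = Fintype.card V) (hconn : G.Connected) (heven : Even n)
    (hn' : n ≥ 10 ∨ n = 4) (h : Nat.card G.edgeSet > (n - 2).choose 2 + 2) :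
    ∃ M : G.Subgraph, M.IsPerfectMatching := by
  classical
  subst hn
  by_contra hno
  obtain ⟨Gm, hle, hfree, hmax⟩ := exists_maximal_isMatchingFree fun M hM => hno ⟨M, hM⟩
  have hne : Gmᶜ ≠ ⊥ := by
    rw [Ne, compl_eq_bot]
    rintro rfl
    obtain ⟨M, hM⟩ := exists_isPerfectMatching_top (V := V) (by rwa [Nat.card_eq_fintype_card])
    exact hfree M hM
  have hdeg : ∀ v, Gmᶜ.degree v + 2 ≤ Fintype.card V := fun v => by
    have : Nontrivial V := Fintype.one_lt_card_iff_nontrivial.mp (by omega)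
    have := (hconn.preconnected.degree_pos_of_nontrivial v).trans_le (degree_le_of_le hle)
    rw [degree_compl]
    omega
  have hcompl := two_mul_card_sub_five_le_card_edgeFinset heven (by omega) hdeg
    (fun x y => hfree.card_le_degree_compl_add_degree_compl hmax) hne
  have hG : Nat.card G.edgeSet ≤ #Gm.edgeFinset := by
    rw [Nat.card_eq_fintype_card, ← edgeFinset_card]
    exact card_le_card (edgeFinset_mono hle)
  have := card_edgeFinset_add_card_edgeFinset_compl (G := Gm)
  have := Nat.choose_two_eq_sub_two_choose_two_add (n := Fintype.card V) (by omega)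
  omega
end

section
/- A finite simple graph G has a fractional perfect matching if and only if for every vertex subset S, the number of isolated vertices of G − S is at most |S|. -/
open SimpleGraph

/-- `f` is a fractional matching of `G`: edge weights lie in `[0,1]`, non-edges get
weight `0`, and the weights of edges incident to any vertex sum to at most `1`. -/
def IsFracMatching {V : Type*} [Fintype V] [DecidableEq V]
    (G : SimpleGraph V) (f : Sym2 V → ℝ) : Prop :=
  (∀ e, 0 ≤ f e ∧ f e ≤ 1) ∧ (∀ e, e ∉ G.edgeSet → f e = 0) ∧
    ∀ v : V, (∑ e : Sym2 V, if v ∈ e then f e else 0) ≤ 1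

/-- The number of isolated vertices of a graph. -/
noncomputable def isolatedCount {W : Type*} (H : SimpleGraph W) : ℕ :=
  Nat.card {v : W | ∀ w : W, ¬ H.Adj v w}

set_option linter.unusedSectionVars false

section Aux

variable {V : Type*} [Fintype V] [DecidableEq V] (G : SimpleGraph V)

lemma isoCount_eq (S : Finset V)
    [DecidablePred fun v : V => v ∉ S ∧ ∀ w ∉ S, ¬ G.Adj v w] :
    isolatedCount (G.induce ((↑S : Set V)ᶜ)) =
      (Finset.univ.filter fun v : V => v ∉ S ∧ ∀ w ∉ S, ¬ G.Adj v w).card := by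
  rw [isolatedCount]
  rw [← Fintype.card_coe, ← Nat.card_eq_fintype_card]
  apply Nat.card_congr
  refine ⟨fun x => ⟨x.1.1, ?_⟩, fun v => ⟨⟨v.1, ?_⟩, ?_⟩, ?_, ?_⟩
  · simp only [Finset.mem_filter, Finset.mem_univ, true_and]
    refine ⟨x.1.2, fun w hw hadj => ?_⟩
    exact x.2 ⟨w, hw⟩ hadj
  · have := v.2; simp only [Finset.mem_filter] at this
    simpa using this.2.1
  · intro w hadj
    have := v.2; simp only [Finset.mem_filter] at this
    exact this.2.2 w.1 w.2 hadj
  · intro x; rfl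
  · intro x; rfl

end Aux

section Fwd

variable {V : Type*} [Fintype V] [DecidableEq V] {G : SimpleGraph V} {f : Sym2 V → ℝ}

lemma sum_ite_mem_sym2 (e : Sym2 V) (he : e ∈ G.edgeSet) (c : ℝ) :
    (∑ v : V, if v ∈ e then c else 0) = 2 * c := by
  induction e with
  | _ a b =>
    have hab : a ≠ b := (G.mem_edgeSet.mp he).ne
    have : ∀ v : V, (v ∈ s(a, b)) ↔ v ∈ ({a, b} : Finset V) := by
      intro v; simp [Sym2.mem_iff]
    rw [Finset.sum_congr rfl (fun v _ => by rw [if_congr (this v) rfl rfl])]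
    rw [Finset.sum_ite_mem, Finset.univ_inter, Finset.sum_const,
      Finset.card_pair hab]
    simp [two_smul, two_mul]

lemma vsum_eq_one (hm : IsFracMatching G f)
    (htot : (∑ e : Sym2 V, f e) = (Fintype.card V : ℝ) / 2) (v : V) :
    (∑ e : Sym2 V, if v ∈ e then f e else 0) = 1 := by
  classical
  obtain ⟨h01, h0, hle⟩ := hm
  have key : ∑ v : V, (∑ e : Sym2 V, if v ∈ e then f e else 0) = Fintype.card V := by
    rw [Finset.sum_comm]
    have : ∀ e : Sym2 V, (∑ v : V, if v ∈ e then f e else 0) = 2 * f e := by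
      intro e
      by_cases he : e ∈ G.edgeSet
      · exact sum_ite_mem_sym2 e he (f e)
      · rw [h0 e he]; simp
    rw [Finset.sum_congr rfl (fun e _ => this e), ← Finset.mul_sum, htot]
    ring
  by_contra hne
  have hlt : (∑ e : Sym2 V, if v ∈ e then f e else 0) < 1 := lt_of_le_of_ne (hle v) hne
  have : ∑ v : V, (∑ e : Sym2 V, if v ∈ e then f e else 0) < ∑ _v : V, (1 : ℝ) :=
    Finset.sum_lt_sum (fun i _ => hle i) ⟨v, Finset.mem_univ v, hlt⟩
  rw [key] at this
  simp at this

end Fwd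

section Fwd2

variable {V : Type*} [Fintype V] [DecidableEq V] {G : SimpleGraph V} {f : Sym2 V → ℝ}

lemma sum_vsum_eq (T : Finset V) :
    ∑ v ∈ T, (∑ e : Sym2 V, if v ∈ e then f e else 0) =
      ∑ e : Sym2 V, ((T.filter (· ∈ e)).card : ℝ) * f e := by
  rw [Finset.sum_comm]
  exact Finset.sum_congr rfl fun e _ => by
    rw [← Finset.sum_filter, Finset.sum_const, nsmul_eq_mul]

lemma forward_dir (hm : IsFracMatching G f)
    (htot : (∑ e : Sym2 V, f e) = (Fintype.card V : ℝ) / 2) (S : Finset V)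
    [DecidablePred fun v : V => v ∉ S ∧ ∀ w ∉ S, ¬ G.Adj v w] :
    (Finset.univ.filter fun v : V => v ∉ S ∧ ∀ w ∉ S, ¬ G.Adj v w).card ≤ S.card := by
  classical
  set I := Finset.univ.filter fun v : V => v ∉ S ∧ ∀ w ∉ S, ¬ G.Adj v w with hI
  have hImem : ∀ v ∈ I, v ∉ S ∧ ∀ w ∉ S, ¬ G.Adj v w := by
    intro v hv; simpa [hI] using hv
  have h1 : (I.card : ℝ) = ∑ v ∈ I, (∑ e : Sym2 V, if v ∈ e then f e else 0) := by
    rw [Finset.sum_congr rfl fun v _ => vsum_eq_one hm htot v, Finset.sum_const,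
      nsmul_eq_mul, mul_one]
  have h2 : ∑ v ∈ I, (∑ e : Sym2 V, if v ∈ e then f e else 0) ≤
      ∑ v ∈ S, (∑ e : Sym2 V, if v ∈ e then f e else 0) := by
    rw [sum_vsum_eq, sum_vsum_eq]
    apply Finset.sum_le_sum
    intro e _
    by_cases he : e ∈ G.edgeSet
    · apply mul_le_mul_of_nonneg_right _ (hm.1 e).1
      have hcard : (I.filter (· ∈ e)).card ≤ (S.filter (· ∈ e)).card := by
        induction e with
        | _ a b =>
          have hadj : G.Adj a b := G.mem_edgeSet.mp he
          by_cases ha : a ∈ I <;> by_cases hb : b ∈ I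
          · exact absurd hadj ((hImem a ha).2 b (hImem b hb).1)
          · have hbS : b ∈ S := by
              by_contra hbS
              exact (hImem a ha).2 b hbS hadj
            calc (I.filter (· ∈ s(a, b))).card ≤ ({a} : Finset V).card := by
                  apply Finset.card_le_card
                  intro v hv
                  simp only [Finset.mem_filter, Sym2.mem_iff] at hv
                  rcases hv.2 with rfl | rfl
                  · simp
                  · exact absurd hv.1 hb
              _ ≤ (S.filter (· ∈ s(a, b))).card := by
                  rw [Finset.card_singleton]
                  exact Finset.card_pos.mpr ⟨b, by simp [hbS]⟩
          · have haS : a ∈ S := by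
              by_contra haS
              exact (hImem b hb).2 a haS hadj.symm
            calc (I.filter (· ∈ s(a, b))).card ≤ ({b} : Finset V).card := by
                  apply Finset.card_le_card
                  intro v hv
                  simp only [Finset.mem_filter, Sym2.mem_iff] at hv
                  rcases hv.2 with rfl | rfl
                  · exact absurd hv.1 ha
                  · simp
              _ ≤ (S.filter (· ∈ s(a, b))).card := by
                  rw [Finset.card_singleton]
                  exact Finset.card_pos.mpr ⟨a, by simp [haS]⟩
          · have : (I.filter (· ∈ s(a, b))) = ∅ := by
              rw [Finset.filter_eq_empty_iff]
              intro v hv hmem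
              rcases Sym2.mem_iff.mp hmem with rfl | rfl
              · exact ha hv
              · exact hb hv
            rw [this]
            simp
      exact_mod_cast hcard
    · rw [hm.2.1 e he]; simp
  have h3 : ∑ v ∈ S, (∑ e : Sym2 V, if v ∈ e then f e else 0) ≤ (S.card : ℝ) := by
    calc ∑ v ∈ S, (∑ e : Sym2 V, if v ∈ e then f e else 0) ≤ ∑ _v ∈ S, (1 : ℝ) :=
        Finset.sum_le_sum fun v _ => hm.2.2 v
      _ = S.card := by simp
  exact_mod_cast h1 ▸ le_trans h2 h3

end Fwd2

section Bwd

variable {V : Type*} [Fintype V] [DecidableEq V] {G : SimpleGraph V}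

lemma hall_of_iso [DecidableRel G.Adj]
    (h : ∀ S : Finset V,
      (Finset.univ.filter fun v : V => v ∉ S ∧ ∀ w ∉ S, ¬ G.Adj v w).card ≤ S.card)
    (s : Finset V) : s.card ≤ (s.biUnion (fun v => G.neighborFinset v)).card := by
  classical
  set T := s.biUnion (fun v => G.neighborFinset v) with hT
  have hsub : s \ T ⊆ Finset.univ.filter fun v : V => v ∉ T \ s ∧ ∀ w ∉ T \ s, ¬ G.Adj v w := by
    intro v hv
    rw [Finset.mem_sdiff] at hv
    simp only [Finset.mem_filter, Finset.mem_univ, true_and, Finset.mem_sdiff, not_and, not_not]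
    refine ⟨fun _ => hv.1, fun w hw hadj => ?_⟩
    have hwT : w ∈ T := Finset.mem_biUnion.mpr ⟨v, hv.1, by simpa using hadj⟩
    have hws : w ∈ s := hw hwT
    exact hv.2 (Finset.mem_biUnion.mpr ⟨w, hws, by simpa using hadj.symm⟩)
  have h1 : (s \ T).card ≤ (T \ s).card :=
    le_trans (Finset.card_le_card hsub) (h (T \ s))
  have h2 : s.card = (s \ T).card + (s ∩ T).card := (Finset.card_sdiff_add_card_inter s T).symm
  have h3 : T.card = (T \ s).card + (T ∩ s).card := (Finset.card_sdiff_add_card_inter T s).symm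
  rw [h2, h3, Finset.inter_comm]
  omega

variable {σ : V → V}

lemma vsum_half (hσinj : Function.Injective σ) (hσ : ∀ v, G.Adj v (σ v)) (u : V) :
    (∑ e : Sym2 V,
      if u ∈ e then (∑ v : V, if s(v, σ v) = e then (1 : ℝ)/2 else 0) else 0) = 1 := by
  classical
  have hbij : Function.Bijective σ := Finite.injective_iff_bijective.mp hσinj
  obtain ⟨w, hw⟩ := hbij.2 u
  have swap : ∀ e : Sym2 V,
      (if u ∈ e then (∑ v : V, if s(v, σ v) = e then (1 : ℝ)/2 else 0) else 0) =
      ∑ v : V, if s(v, σ v) = e then (if u ∈ e then (1 : ℝ)/2 else 0) else 0 := by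
    intro e
    by_cases hu : u ∈ e <;> simp [hu]
  rw [Finset.sum_congr rfl fun e _ => swap e, Finset.sum_comm]
  have collapse : ∀ v : V,
      (∑ e : Sym2 V, if s(v, σ v) = e then (if u ∈ e then (1 : ℝ)/2 else 0) else 0) =
      if u ∈ s(v, σ v) then (1 : ℝ)/2 else 0 := by
    intro v
    rw [Finset.sum_ite_eq Finset.univ (s(v, σ v))
      (fun e => if u ∈ e then (1 : ℝ)/2 else 0)]
    simp
  rw [Finset.sum_congr rfl fun v _ => collapse v]
  have hcond : ∀ v : V, (u ∈ s(v, σ v)) ↔ v ∈ ({u, w} : Finset V) := by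
    intro v
    rw [Sym2.mem_iff]
    constructor
    · rintro (rfl | h)
      · simp
      · exact Finset.mem_insert.mpr (Or.inr (Finset.mem_singleton.mpr ((hσinj (hw.trans h)).symm)))
    · intro hv
      rcases Finset.mem_insert.mp hv with rfl | hv
      · left; rfl
      · right; rw [Finset.mem_singleton.mp hv]; exact hw.symm
  have huw : u ≠ w := by
    rintro rfl
    exact G.irrefl (hw ▸ hσ u)
  rw [Finset.sum_congr rfl fun v _ => if_congr (hcond v) rfl rfl,
    Finset.sum_ite_mem, Finset.univ_inter, Finset.sum_const, Finset.card_pair huw]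
  norm_num

end Bwd

section Bwd2

variable {V : Type*} [Fintype V] [DecidableEq V] {G : SimpleGraph V} {σ : V → V}

lemma bwd_matching (hσinj : Function.Injective σ) (hσ : ∀ v, G.Adj v (σ v)) :
    ∃ f : Sym2 V → ℝ, IsFracMatching G f ∧
      (∑ e : Sym2 V, f e) = (Fintype.card V : ℝ) / 2 := by
  classical
  refine ⟨fun e => ∑ v : V, if s(v, σ v) = e then (1 : ℝ)/2 else 0, ⟨?_, ?_, ?_⟩, ?_⟩
  · intro e
    constructor
    · exact Finset.sum_nonneg fun v _ => by positivity
    · show (∑ v : V, if s(v, σ v) = e then (1 : ℝ)/2 else 0) ≤ 1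
      rw [← Finset.sum_filter, Finset.sum_const, nsmul_eq_mul]
      have hcard : (Finset.univ.filter fun v : V => s(v, σ v) = e).card ≤ 2 := by
        induction e with
        | _ a b =>
          calc (Finset.univ.filter fun v : V => s(v, σ v) = s(a, b)).card
              ≤ ({a, b} : Finset V).card := by
                apply Finset.card_le_card
                intro v hv
                simp only [Finset.mem_filter, Finset.mem_univ, true_and, Sym2.eq_iff] at hv
                rcases hv with ⟨rfl, _⟩ | ⟨rfl, _⟩ <;> simp
            _ ≤ 2 := Finset.card_insert_le a {b} |>.trans (by simp)
      calc ((Finset.univ.filter fun v : V => s(v, σ v) = e).card : ℝ) * (1/2)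
          ≤ 2 * (1/2) := by
            apply mul_le_mul_of_nonneg_right _ (by norm_num)
            exact_mod_cast hcard
        _ = 1 := by norm_num
  · intro e he
    apply Finset.sum_eq_zero
    intro v _
    rw [if_neg]
    intro heq
    exact he (heq ▸ (G.mem_edgeSet.mpr (hσ v)))
  · intro v
    exact le_of_eq (vsum_half hσinj hσ v)
  · rw [Finset.sum_comm]
    have : ∀ v : V, (∑ e : Sym2 V, if s(v, σ v) = e then (1 : ℝ)/2 else 0) = 1/2 := by
      intro v
      rw [Finset.sum_ite_eq Finset.univ (s(v, σ v)) (fun _ => (1 : ℝ)/2)]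
      simp
    rw [Finset.sum_congr rfl fun v _ => this v, Finset.sum_const, nsmul_eq_mul,
      Finset.card_univ]
    ring

end Bwd2

/-- A graph has a fractional perfect matching iff `i(G - S) ≤ |S|` for all `S`. -/
theorem fractional_perfect_matching_iff {V : Type*} [Fintype V] [DecidableEq V]
    (G : SimpleGraph V) :
    (∃ f : Sym2 V → ℝ, IsFracMatching G f ∧
        (∑ e : Sym2 V, f e) = (Fintype.card V : ℝ) / 2) ↔
      ∀ S : Finset V, isolatedCount (G.induce ((↑S : Set V)ᶜ)) ≤ S.card := by
  classical
  constructor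
  · rintro ⟨f, hm, htot⟩ S
    rw [isoCount_eq G S]
    exact forward_dir hm htot S
  · intro h
    have hall : ∀ s : Finset V, s.card ≤ (s.biUnion (fun v => G.neighborFinset v)).card := by
      apply hall_of_iso
      intro S
      have hS := h S
      rwa [isoCount_eq G S] at hS
    obtain ⟨σ, hσinj, hσmem⟩ :=
      (Finset.all_card_le_biUnion_card_iff_exists_injective
        (fun v => G.neighborFinset v)).mp hall
    exact bwd_matching hσinj fun v => by simpa using hσmem v
end

section
/- If G is a finite simple graph on n vertices with minimum degree δ ≥ 1 and adjacency spectral radius ρ, then the fractional matching number of G is at least nδ²/(ρ² + δ²). -/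
open SimpleGraph

/-- The fractional matching number: the supremum of total weights of fractional
matchings. -/
noncomputable def fracMatchNum {V : Type*} [Fintype V] [DecidableEq V]
    (G : SimpleGraph V) : ℝ :=
  sSup {x : ℝ | ∃ f : Sym2 V → ℝ, IsFracMatching G f ∧ (∑ e : Sym2 V, f e) = x}

/-- The adjacency spectral radius: the largest real eigenvalue of the adjacency matrix. -/
noncomputable def specRad {V : Type*} [Fintype V] [DecidableEq V]
    (G : SimpleGraph V) [DecidableRel G.Adj] : ℝ :=
  sSup (spectrum ℝ (G.adjMatrix ℝ))

/-!
Write `ρ` for the spectral radius and `δ` for the minimum degree. By Hall's theorem with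
deficiency, applied to the bipartite double cover, if `|S| - |N(S)| ≤ D` for every vertex set `S`
then `G` has a half-integral fractional matching of weight `(n - D) / 2`. Given `S`, let `S' ⊆ S`
consist of the vertices with no neighbour in `S`: then `N(S')` misses `S`, so
`|S| - |N(S)| ≤ |S'| - |N(S')|` and `|S'| + |N(S')| ≤ n`. Testing the Rayleigh bound
`xᵀAx ≤ ρ ‖x‖²` on `x = a 1_{S'} + b 1_{N(S')}` for all `a, b ≥ 0` gives `|S'| δ² ≤ |N(S')| ρ²`,
and these three inequalities bound the deficiency by `n (ρ² - δ²) / (ρ² + δ²)`.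
-/

open Finset Matrix

open scoped MatrixOrder in
theorem Matrix.IsHermitian.dotProduct_mulVec_le_sSup_spectrum {n : Type*} [Fintype n]
    [DecidableEq n] {A : Matrix n n ℝ} (hA : A.IsHermitian) (x : n → ℝ) :
    x ⬝ᵥ (A *ᵥ x) ≤ sSup (spectrum ℝ A) * (x ⬝ᵥ x) := by
  have hle : A ≤ algebraMap ℝ _ (sSup (spectrum ℝ A)) :=
    (le_algebraMap_iff_spectrum_le hA.isSelfAdjoint).2 fun μ hμ =>
      le_csSup (finite_real_spectrum (A := A)).bddAbove hμ
  simpa [sub_mulVec, Algebra.algebraMap_eq_smul_one, smul_mulVec, dotProduct_smul] using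
    (le_iff.1 hle).dotProduct_mulVec_nonneg x

theorem sq_le_mul_of_forall_two_mul_mul_le {e p q : ℝ} (he : 0 ≤ e)
    (h : ∀ a b : ℝ, 0 ≤ a → 0 ≤ b → 2 * a * b * e ≤ p * a ^ 2 + q * b ^ 2) :
    e ^ 2 ≤ p * q := by
  have hp : 0 ≤ p := by simpa using h 1 0 zero_le_one le_rfl
  have hq : 0 ≤ q := by simpa using h 0 1 le_rfl zero_le_one
  have hdisc := discrim_le_zero (a := p) (b := -2 * e) (c := q) fun x => by
    rcases le_total 0 x with hx | hx
    · nlinarith [h x 1 hx zero_le_one]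
    · nlinarith [mul_nonneg hp (mul_self_nonneg x)]
  rw [discrim] at hdisc
  nlinarith

theorem Finset.exists_injective_disjSum_of_card_le_card_biUnion_add {ι α : Type*} [Fintype ι]
    [DecidableEq α] (t : ι → Finset α) (k : ℕ) (h : ∀ s : Finset ι, #s ≤ #(s.biUnion t) + k) :
    ∃ F : ι → α ⊕ Fin k, F.Injective ∧ ∀ i, F i ∈ (t i).disjSum univ := by
  refine (all_card_le_biUnion_card_iff_exists_injective _).1 fun s => ?_
  rcases s.eq_empty_or_nonempty with rfl | ⟨i₀, hi₀⟩
  · simp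
  calc #s ≤ #((s.biUnion t).disjSum (univ : Finset (Fin k))) := by simpa using h s
    _ ≤ #(s.biUnion fun i => (t i).disjSum univ) := card_le_card fun x hx => by
      rcases x with a | j
      · obtain ⟨i, hi, ha⟩ := mem_biUnion.1 (inl_mem_disjSum.1 hx)
        exact mem_biUnion.2 ⟨i, hi, inl_mem_disjSum.2 ha⟩
      · exact mem_biUnion.2 ⟨i₀, hi₀, inr_mem_disjSum.2 (mem_univ j)⟩

theorem Set.InjOn.card_filter_mem_mk_le_two {α : Type*} [DecidableEq α] {A : Finset α}
    {φ : α → α} (hφ : Set.InjOn φ A) (w : α) : #(A.filter fun v => w ∈ s(v, φ v)) ≤ 2 := by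
  have hpre : #(A.filter fun v => φ v = w) ≤ 1 := card_le_one.2 fun a ha b hb =>
    hφ (mem_filter.1 ha).1 (mem_filter.1 hb).1 ((mem_filter.1 ha).2.trans (mem_filter.1 hb).2.symm)
  calc #(A.filter fun v => w ∈ s(v, φ v)) ≤ #(insert w (A.filter fun v => φ v = w)) :=
        Finset.card_le_card fun v hv => by
          rw [mem_filter, Sym2.mem_iff] at hv
          rcases hv with ⟨hvA, rfl | h⟩
          · exact Finset.mem_insert_self _ _
          · exact Finset.mem_insert_of_mem (mem_filter.2 ⟨hvA, h.symm⟩)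
    _ ≤ 2 := by have := card_insert_le w (A.filter fun v => φ v = w); omega

namespace SimpleGraph

variable {V : Type*} [Fintype V] (G : SimpleGraph V)

section FractionalMatching

variable [DecidableEq V]

lemma isFracMatching_of_sum_le_one {f : Sym2 V → ℝ} (hf : ∀ e, 0 ≤ f e)
    (hsupp : ∀ e, e ∉ G.edgeSet → f e = 0) (hload : ∀ v, (∑ e, if v ∈ e then f e else 0) ≤ 1) :
    IsFracMatching G f := by
  refine ⟨fun e => ⟨hf e, ?_⟩, hsupp, hload⟩
  induction e using Sym2.ind with
  | _ a b =>
    calc f s(a, b) = if a ∈ s(a, b) then f s(a, b) else 0 := by simp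
      _ ≤ ∑ e, if a ∈ e then f e else 0 :=
        single_le_sum (f := fun e => if a ∈ e then f e else 0)
          (fun e _ => by split_ifs <;> simp [hf]) (mem_univ _)
      _ ≤ 1 := hload a

lemma sum_le_fracMatchNum {f : Sym2 V → ℝ} (hf : IsFracMatching G f) :
    ∑ e, f e ≤ fracMatchNum G := by
  refine le_csSup ⟨Fintype.card (Sym2 V), ?_⟩ ⟨f, hf, rfl⟩
  rintro _ ⟨g, hg, rfl⟩
  exact (sum_le_sum fun e _ => (hg.1 e).2).trans_eq (by simp)

lemma exists_isFracMatching_of_injOn (A : Finset V) (φ : V → V) (hφ : Set.InjOn φ A)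
    (hadj : ∀ v ∈ A, G.Adj v (φ v)) :
    ∃ f, IsFracMatching G f ∧ ∑ e, f e = #A / 2 := by
  set f : Sym2 V → ℝ := fun e => ∑ v ∈ A, if s(v, φ v) = e then 1 / 2 else 0
  have hsum : ∀ g : Sym2 V → ℝ, ∑ e, g e * f e = ∑ v ∈ A, g s(v, φ v) / 2 := fun g => by
    simp only [f, mul_sum, mul_ite, mul_zero]
    rw [sum_comm]
    simp [sum_ite_eq, div_eq_mul_inv]
  have hload : ∀ w, (∑ e, if w ∈ e then f e else 0) ≤ 1 := fun w => by
    have hcover : (#(A.filter fun v => w ∈ s(v, φ v)) : ℝ) ≤ 2 := by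
      exact_mod_cast hφ.card_filter_mem_mk_le_two w
    calc ∑ e, (if w ∈ e then f e else 0) = ∑ e, (if w ∈ e then 1 else 0) * f e := by
          simp only [boole_mul]
      _ = ∑ v ∈ A, (if w ∈ s(v, φ v) then 1 else 0) / 2 := hsum _
      _ ≤ 1 := by rw [← sum_div, sum_boole]; linarith
  have hsupp : ∀ e, e ∉ G.edgeSet → f e = 0 := fun e he =>
    sum_eq_zero fun v hv => if_neg fun (h : s(v, φ v) = e) => he (h ▸ hadj v hv)
  refine ⟨f, G.isFracMatching_of_sum_le_one (fun e => sum_nonneg fun _ _ => by positivity)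
    hsupp hload, ?_⟩
  simpa [div_eq_mul_inv] using hsum 1

end FractionalMatching

variable [DecidableRel G.Adj]

lemma dotProduct_adjMatrix_mulVec_comm (x y : V → ℝ) :
    y ⬝ᵥ (G.adjMatrix ℝ *ᵥ x) = x ⬝ᵥ (G.adjMatrix ℝ *ᵥ y) := by
  rw [dotProduct_mulVec, ← mulVec_transpose, transpose_adjMatrix, dotProduct_comm]

lemma dotProduct_adjMatrix_mulVec_nonneg {x y : V → ℝ} (hx : 0 ≤ x) (hy : 0 ≤ y) :
    0 ≤ x ⬝ᵥ (G.adjMatrix ℝ *ᵥ y) :=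
  sum_nonneg fun v _ => mul_nonneg (hx v) <| by
    rw [adjMatrix_mulVec_apply]; exact sum_nonneg fun u _ => hy u

lemma card_mul_minDegree_le_sum_degree (S : Finset V) :
    (#S : ℝ) * G.minDegree ≤ ∑ u ∈ S, (G.degree u : ℝ) := by
  simpa using card_nsmul_le_sum S _ _ fun v _ =>
    (Nat.cast_le (α := ℝ)).2 (G.minDegree_le_degree v)

variable [DecidableEq V]

def neighborhood (S : Finset V) : Finset V := S.biUnion fun v => G.neighborFinset v

variable {G}

lemma mem_neighborhood {S : Finset V} {v : V} :
    v ∈ G.neighborhood S ↔ ∃ u ∈ S, G.Adj u v := by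
  simp [neighborhood]

lemma neighborFinset_subset_neighborhood {S : Finset V} {v : V} (hv : v ∈ S) :
    G.neighborFinset v ⊆ G.neighborhood S :=
  subset_biUnion_of_mem (fun v => G.neighborFinset v) hv

variable (G)

lemma indicator_dotProduct_adjMatrix_mulVec_indicator_neighborhood (S : Finset V) :
    (S : Set V).indicator 1 ⬝ᵥ (G.adjMatrix ℝ *ᵥ (G.neighborhood S : Set V).indicator 1)
      = ∑ u ∈ S, (G.degree u : ℝ) := by
  simp only [dotProduct, adjMatrix_mulVec_apply, Set.indicator_apply, mem_coe,
    Pi.one_apply, ite_mul, one_mul, zero_mul, sum_ite_mem, univ_inter]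
  refine sum_congr rfl fun v hv => ?_
  rw [inter_eq_left.2 (neighborFinset_subset_neighborhood hv)]
  simp

lemma indicator_dotProduct_indicator (S T : Finset V) :
    (S : Set V).indicator (1 : V → ℝ) ⬝ᵥ (T : Set V).indicator 1 = #(S ∩ T) := by
  simp [dotProduct, Set.indicator_apply, sum_ite_mem, inter_comm]

lemma sq_sum_degree_le_of_disjoint_neighborhood (S : Finset V)
    (hS : Disjoint S (G.neighborhood S)) :
    (∑ u ∈ S, (G.degree u : ℝ)) ^ 2
      ≤ (specRad G * #S) * (specRad G * #(G.neighborhood S)) := by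
  refine sq_le_mul_of_forall_two_mul_mul_le (by positivity) fun a b ha hb => ?_
  set x := (S : Set V).indicator (1 : V → ℝ)
  set y := (G.neighborhood S : Set V).indicator (1 : V → ℝ)
  have hx : 0 ≤ x := Set.indicator_nonneg fun _ _ => zero_le_one
  have hy : 0 ≤ y := Set.indicator_nonneg fun _ _ => zero_le_one
  have hquad : (a • x + b • y) ⬝ᵥ (G.adjMatrix ℝ *ᵥ (a • x + b • y))
      = a ^ 2 * (x ⬝ᵥ (G.adjMatrix ℝ *ᵥ x)) + 2 * a * b * ∑ u ∈ S, (G.degree u : ℝ)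
        + b ^ 2 * (y ⬝ᵥ (G.adjMatrix ℝ *ᵥ y)) := by
    simp only [mulVec_add, mulVec_smul, dotProduct_add, add_dotProduct, dotProduct_smul,
      smul_dotProduct, smul_eq_mul, dotProduct_adjMatrix_mulVec_comm G x y,
      ← G.indicator_dotProduct_adjMatrix_mulVec_indicator_neighborhood S]
    ring
  have hnorm : (a • x + b • y) ⬝ᵥ (a • x + b • y) = a ^ 2 * #S + b ^ 2 * #(G.neighborhood S) := by
    simp only [dotProduct_add, add_dotProduct, dotProduct_smul, smul_dotProduct, smul_eq_mul, x, y,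
      indicator_dotProduct_indicator, inter_self, disjoint_iff_inter_eq_empty.1 hS,
      inter_comm (G.neighborhood S) S, card_empty, Nat.cast_zero]
    ring
  have hray := (G.isHermitian_adjMatrix ℝ).dotProduct_mulVec_le_sSup_spectrum (a • x + b • y)
  rw [hquad, hnorm] at hray
  unfold specRad
  nlinarith [G.dotProduct_adjMatrix_mulVec_nonneg hx hx, G.dotProduct_adjMatrix_mulVec_nonneg hy hy]

lemma minDegree_le_specRad [Nonempty V] : (G.minDegree : ℝ) ≤ specRad G := by
  have hray := (G.isHermitian_adjMatrix ℝ).dotProduct_mulVec_le_sSup_spectrum 1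
  simp only [one_dotProduct, adjMatrix_mulVec_apply, Pi.one_apply, sum_const,
    card_neighborFinset_eq_degree, nsmul_one, card_univ] at hray
  have hsum := G.card_mul_minDegree_le_sum_degree univ
  rw [card_univ] at hsum
  have hcard : (0 : ℝ) < Fintype.card V := by exact_mod_cast Fintype.card_pos
  unfold specRad
  nlinarith

lemma card_mul_minDegree_sq_le_of_disjoint_neighborhood (S : Finset V)
    (hS : Disjoint S (G.neighborhood S)) :
    (#S : ℝ) * G.minDegree ^ 2 ≤ #(G.neighborhood S) * specRad G ^ 2 := by
  have hsum := G.card_mul_minDegree_le_sum_degree S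
  have hsq := G.sq_sum_degree_le_of_disjoint_neighborhood S hS
  rcases (Nat.cast_nonneg (α := ℝ) #S).eq_or_lt with hS0 | hSpos
  · rw [← hS0, zero_mul]; positivity
  · refine le_of_mul_le_mul_left ?_ hSpos
    nlinarith [pow_le_pow_left₀ (by positivity) hsum 2]

lemma card_sub_card_neighborhood_mul_le [Nonempty V] (S : Finset V) :
    ((#S : ℝ) - #(G.neighborhood S)) * (specRad G ^ 2 + G.minDegree ^ 2)
      ≤ Fintype.card V * (specRad G ^ 2 - G.minDegree ^ 2) := by
  set S' := S.filter fun v => ∀ u ∈ S, ¬ G.Adj v u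
  have hS'S : S' ⊆ S := filter_subset _ _
  have hdisj : Disjoint (G.neighborhood S') S := by
    refine Finset.disjoint_left.2 fun w hw hwS => ?_
    obtain ⟨u, hu, huw⟩ := mem_neighborhood.1 hw
    exact (mem_filter.1 hu).2 w hwS huw
  have hsdiff : S \ S' ⊆ G.neighborhood S := fun v hv => by
    obtain ⟨hvS, hvS'⟩ := mem_sdiff.1 hv
    obtain ⟨u, hu, hvu⟩ : ∃ u ∈ S, G.Adj v u := by simpa [S', hvS] using hvS'
    exact mem_neighborhood.2 ⟨u, hu, hvu.symm⟩
  have hmono : G.neighborhood S' ⊆ G.neighborhood S :=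
    biUnion_subset_biUnion_of_subset_left _ hS'S
  have hdefect : #(G.neighborhood S') + #(S \ S') ≤ #(G.neighborhood S) := by
    rw [← card_union_of_disjoint (hdisj.mono_right sdiff_subset)]
    exact card_le_card (union_subset hmono hsdiff)
  have hsplit : #S' + #(G.neighborhood S') ≤ Fintype.card V := by
    rw [← card_union_of_disjoint (hdisj.mono_right hS'S).symm]
    exact card_le_univ _
  have hS' : (#S : ℝ) - #(G.neighborhood S) ≤ #S' - #(G.neighborhood S') := by
    have := card_sdiff_add_card_eq_card hS'S
    rw [sub_le_sub_iff]
    exact_mod_cast (by omega : #S + #(G.neighborhood S') ≤ #S' + #(G.neighborhood S))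
  have hn : (#S' : ℝ) + #(G.neighborhood S') ≤ Fintype.card V := by exact_mod_cast hsplit
  have hspec := G.card_mul_minDegree_sq_le_of_disjoint_neighborhood S' (hdisj.mono_right hS'S).symm
  have hρ := G.minDegree_le_specRad
  have hδ : (0 : ℝ) ≤ G.minDegree := Nat.cast_nonneg _
  nlinarith [mul_le_mul_of_nonneg_right hS' (by positivity : 0 ≤ specRad G ^ 2 + G.minDegree ^ 2),
    mul_le_mul_of_nonneg_right hn (by nlinarith : 0 ≤ specRad G ^ 2 - G.minDegree ^ 2)]

lemma exists_injOn_adj_of_card_le_card_neighborhood_add (k : ℕ)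
    (h : ∀ S : Finset V, #S ≤ #(G.neighborhood S) + k) :
    ∃ (A : Finset V) (φ : V → V), Fintype.card V ≤ #A + k ∧ Set.InjOn φ A ∧
      ∀ v ∈ A, G.Adj v (φ v) := by
  obtain ⟨F, hFinj, hF⟩ :=
    Finset.exists_injective_disjSum_of_card_le_card_biUnion_add (fun v => G.neighborFinset v) k h
  set φ : V → V := fun v => (F v).elim id fun _ => v
  set A := univ.filter fun v => F v = Sum.inl (φ v)
  have hAc : #Aᶜ ≤ k := by
    have hmaps : ∀ v ∈ Aᶜ, F v ∈ (univ : Finset (Fin k)).image Sum.inr := fun v hv => by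
      rcases hFv : F v with w | j
      · simp [A, φ, hFv] at hv
      · exact mem_image_of_mem _ (mem_univ j)
    simpa using (card_le_card_of_injOn F hmaps hFinj.injOn).trans card_image_le
  refine ⟨A, φ, ?_, fun u hu v hv huv => hFinj ?_, fun v hv => ?_⟩
  · have := card_compl_add_card A
    omega
  · rw [(mem_filter.1 hu).2, (mem_filter.1 hv).2, huv]
  · have := hF v
    rw [(mem_filter.1 hv).2, inl_mem_disjSum] at this
    exact (G.mem_neighborFinset v _).1 this

lemma le_fracMatchNum_of_card_le_card_neighborhood_add {D : ℝ}
    (h : ∀ S : Finset V, (#S : ℝ) ≤ #(G.neighborhood S) + D) :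
    (Fintype.card V - D) / 2 ≤ fracMatchNum G := by
  have hD : 0 ≤ D := by simpa [neighborhood] using h ∅
  obtain ⟨A, φ, hA, hφ, hadj⟩ := G.exists_injOn_adj_of_card_le_card_neighborhood_add ⌊D⌋₊
    fun S => by
      by_contra! hlt
      have : (#(G.neighborhood S) : ℝ) + ⌊D⌋₊ + 1 ≤ #S := by exact_mod_cast hlt
      linarith [h S, Nat.lt_floor_add_one D]
  obtain ⟨f, hf, hsum⟩ := G.exists_isFracMatching_of_injOn A φ hφ hadj
  have hA' : (Fintype.card V : ℝ) ≤ #A + ⌊D⌋₊ := by exact_mod_cast hA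
  calc (Fintype.card V - D) / 2 ≤ #A / 2 := by linarith [Nat.floor_le hD]
    _ = ∑ e, f e := hsum.symm
    _ ≤ fracMatchNum G := G.sum_le_fracMatchNum hf

end SimpleGraph

/-- O's bound: `α*'(G) ≥ n δ² / (ρ² + δ²)`. -/
theorem fracMatchNum_lower_bound {V : Type*} [Fintype V] [DecidableEq V]
    (G : SimpleGraph V) [DecidableRel G.Adj]
    (n : ℕ) (hn : n = Fintype.card V) (δ : ℕ) (hδ : δ = G.minDegree) (hδ1 : 1 ≤ δ) :
    (n : ℝ) * (δ : ℝ) ^ 2 / ((specRad G) ^ 2 + (δ : ℝ) ^ 2) ≤ fracMatchNum G := by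
  subst hn hδ
  have : Nonempty V := by
    by_contra hV
    have : IsEmpty V := not_nonempty_iff.1 hV
    simp [minDegree_of_subsingleton] at hδ1
  have hden : 0 < specRad G ^ 2 + G.minDegree ^ 2 := by
    have : (0 : ℝ) < G.minDegree := by exact_mod_cast hδ1
    positivity
  convert G.le_fracMatchNum_of_card_le_card_neighborhood_add
    (D := Fintype.card V * (specRad G ^ 2 - G.minDegree ^ 2) / (specRad G ^ 2 + G.minDegree ^ 2))
    fun S => ?_ using 1
  · field_simp
    ring
  · rw [← sub_le_iff_le_add', le_div_iff₀ hden]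
    exact G.card_sub_card_neighborhood_mul_le S
end

section
/- A finite simple graph G has a spanning subgraph in which every connected component is a path on 2 or 3 vertices ({P_2, P_3}-factor) if and only if for every vertex subset S, the number of isolated vertices of G − S is at most 2|S| (Akiyama–Jin–Era theorem). -/
open SimpleGraph

/-!
A `{P₂, P₃}`-factor is a spanning forest of stars with one or two leaves, which we encode by the
partial map `f : V → Option V` sending each leaf to its center.

Necessity: every isolated vertex of `G - S` has a neighbour in the factor, necessarily in `S`,
and a vertex of `S` has at most two neighbours in the factor.

Sufficiency: take a star forest covering as many vertices as possible and suppose some `u₀` is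
uncovered. Swapping a leaf of a center for an uncovered neighbour of that center preserves
optimality and the number of leaves at every center. Call a vertex exposed if some sequence of
swaps uncovers it, and let `S` be the set of neighbours of exposed vertices. By optimality every
vertex of `S` is a center with two leaves, these leaves are exposed, and no two exposed vertices
are adjacent. So the exposed vertices are isolated in `G - S`, and there are at least `2|S| + 1`
of them: `u₀` and the leaves of the centers in `S`.
-/

open Finset

namespace Function

variable {α β : Type*} [DecidableEq α] {f : α → Option β} {a x : α} {b c : β}

lemma update_none_apply_eq_some : update f x none a = some b ↔ a ≠ x ∧ f a = some b := by
  by_cases h : a = x <;> simp [h]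

lemma update_some_apply_eq_some :
    update f x (some c) a = some b ↔ a = x ∧ c = b ∨ a ≠ x ∧ f a = some b := by
  by_cases h : a = x <;> simp [h]

end Function

namespace SimpleGraph

variable {V W W' : Type*}

theorem isolatedCount_induce_compl [Fintype V] [DecidableEq V] {G : SimpleGraph V}
    [DecidableRel G.Adj] (S : Finset V) :
    isolatedCount (G.induce (↑S)ᶜ) = #{v | v ∉ S ∧ ∀ w, G.Adj v w → w ∈ S} := by
  rw [isolatedCount, ← Fintype.card_subtype, ← Nat.card_eq_fintype_card]
  refine Nat.card_congr
    { toFun := fun v => ⟨v.1.1, v.1.2, fun w hw => by_contra fun hwS => v.2 ⟨w, hwS⟩ hw⟩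
      invFun := fun v => ⟨⟨v.1, v.2.1⟩, fun w hw => w.2 (v.2.2 w hw)⟩
      left_inv := fun _ => rfl
      right_inv := fun _ => rfl }

theorem ncard_neighborSet_eq_of_iso_induce_supp {Γ : SimpleGraph W} {K : SimpleGraph W'}
    {c : Γ.ConnectedComponent} (e : Γ.induce c.supp ≃g K) {v : W} (hv : v ∈ c.supp) :
    (Γ.neighborSet v).ncard = (K.neighborSet (e ⟨v, hv⟩)).ncard := by
  rw [← Nat.card_coe_set_eq, ← Nat.card_coe_set_eq, ← Nat.card_congr (e.mapNeighborSet _)]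
  refine Nat.card_congr
    { toFun := fun w => ⟨⟨w.1, c.mem_supp_of_adj_mem_supp hv w.2⟩, w.2⟩
      invFun := fun w => ⟨w.1.1, w.2⟩
      left_inv := fun _ => rfl
      right_inv := fun _ => rfl }

theorem ncard_neighborSet_pathGraph_mem_Icc {n : ℕ} (hn : n = 2 ∨ n = 3) (i : Fin n) :
    ((pathGraph n).neighborSet i).ncard ∈ Set.Icc 1 2 := by
  rw [show (pathGraph n).neighborSet i = {j : Fin n | (i : ℕ) + 1 = j ∨ (j : ℕ) + 1 = i} from
    Set.ext fun _ => pathGraph_adj, Set.ncard_eq_toFinset_card']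
  rcases hn with rfl | rfl <;> revert i <;> decide

theorem nonempty_iso_induce_supp_of_embedding {Γ : SimpleGraph W} {K : SimpleGraph W'}
    (hK : K.Connected) (e : K ↪g Γ) (hclosed : ∀ i x, Γ.Adj (e i) x → x ∈ Set.range e)
    (i : W') : Nonempty (Γ.induce (Γ.connectedComponentMk (e i)).supp ≃g K) := by
  have hwalk : ∀ {a b}, Γ.Walk a b → a ∈ Set.range e → b ∈ Set.range e := by
    intro a b p
    induction p with
    | nil => exact id
    | cons h _ ih => rintro ⟨j, rfl⟩; exact ih (hclosed j _ h)
  have hsupp : (Γ.connectedComponentMk (e i)).supp = Set.range e := by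
    ext x
    rw [ConnectedComponent.mem_supp_iff, ConnectedComponent.eq]
    refine ⟨fun ⟨p⟩ => hwalk p.reverse ⟨i, rfl⟩, ?_⟩
    rintro ⟨j, rfl⟩
    exact (hK.preconnected j i).map e.toHom
  rw [hsupp]
  exact ⟨e.isoInduceRange.symm⟩

theorem nonempty_iso_pathGraph_two {Γ : SimpleGraph W} {a b : W}
    (ha : ∀ x, Γ.Adj a x ↔ x = b) (hb : ∀ x, Γ.Adj b x ↔ x = a) :
    Nonempty (Γ.induce (Γ.connectedComponentMk a).supp ≃g pathGraph 2) := by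
  have hab : a ≠ b := Γ.ne_of_adj ((ha b).2 rfl)
  have hinj : Function.Injective ![a, b] := by
    intro i j; fin_cases i <;> fin_cases j <;> simp [hab, hab.symm]
  have hadj : ∀ i j, Γ.Adj (![a, b] i) (![a, b] j) ↔ (pathGraph 2).Adj i j := by
    intro i j; fin_cases i <;> fin_cases j <;> simp [pathGraph_adj, ha, hb]
  refine nonempty_iso_induce_supp_of_embedding (pathGraph_connected 1)
    ⟨⟨_, hinj⟩, hadj _ _⟩ (fun i x hx => ?_) 0
  change Γ.Adj (![a, b] i) x at hx
  fin_cases i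
  · exact ⟨1, ((ha x).1 hx).symm⟩
  · exact ⟨0, ((hb x).1 hx).symm⟩

theorem nonempty_iso_pathGraph_three {Γ : SimpleGraph W} {a b c : W} (hac : a ≠ c)
    (ha : ∀ x, Γ.Adj a x ↔ x = b) (hb : ∀ x, Γ.Adj b x ↔ x = a ∨ x = c)
    (hc : ∀ x, Γ.Adj c x ↔ x = b) :
    Nonempty (Γ.induce (Γ.connectedComponentMk b).supp ≃g pathGraph 3) := by
  have hab : a ≠ b := Γ.ne_of_adj ((ha b).2 rfl)
  have hcb : c ≠ b := Γ.ne_of_adj ((hc b).2 rfl)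
  have hinj : Function.Injective ![a, b, c] := by
    intro i j
    fin_cases i <;> fin_cases j <;> simp [hab, hab.symm, hac, hac.symm, hcb, hcb.symm]
  have hadj : ∀ i j, Γ.Adj (![a, b, c] i) (![a, b, c] j) ↔ (pathGraph 3).Adj i j := by
    intro i j
    fin_cases i <;> fin_cases j <;> simp [pathGraph_adj, ha, hb, hc, hab, hac.symm, hcb]
  refine nonempty_iso_induce_supp_of_embedding (pathGraph_connected 2)
    ⟨⟨_, hinj⟩, hadj _ _⟩ (fun i x hx => ?_) 1
  change Γ.Adj (![a, b, c] i) x at hx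
  fin_cases i
  · exact ⟨1, ((ha x).1 hx).symm⟩
  · rcases (hb x).1 hx with rfl | rfl
    exacts [⟨0, rfl⟩, ⟨2, rfl⟩]
  · exact ⟨1, ((hc x).1 hx).symm⟩

theorem card_isolated_le_of_ncard_neighborSet_mem_Icc [Fintype V] [DecidableEq V]
    {G : SimpleGraph V} [DecidableRel G.Adj] {k : ℕ} (H : G.Subgraph)
    (hH : ∀ v, (H.neighborSet v).ncard ∈ Set.Icc 1 k) (S : Finset V) :
    #{v | v ∉ S ∧ ∀ w, G.Adj v w → w ∈ S} ≤ k * #S := by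
  choose nb hnb using fun v => Set.nonempty_of_ncard_ne_zero (Nat.one_le_iff_ne_zero.1 (hH v).1)
  refine card_le_mul_card_image_of_maps_to (f := nb) (fun v hv => ?_) k (fun s _ => ?_)
  · exact (mem_filter.1 hv).2.2 _ (H.adj_sub (hnb v))
  · calc #{v ∈ _ | nb v = s} ≤ (H.neighborSet s).ncard := by
          rw [← Set.ncard_coe_finset]
          refine Set.ncard_le_ncard (fun v hv => ?_) (Set.toFinite _)
          have hv : nb v = s := (mem_filter.1 hv).2
          exact (hv ▸ hnb v : H.Adj v s).symm
      _ ≤ k := (hH s).2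

namespace Subgraph

variable {G : SimpleGraph V}

def IsP23Factor (H : G.Subgraph) : Prop :=
  H.IsSpanning ∧ ∀ c : H.coe.ConnectedComponent,
    Nonempty (H.coe.induce c.supp ≃g pathGraph 2) ∨
      Nonempty (H.coe.induce c.supp ≃g pathGraph 3)

theorem IsP23Factor.ncard_neighborSet_mem_Icc {H : G.Subgraph} (hH : H.IsP23Factor) (v : V) :
    (H.neighborSet v).ncard ∈ Set.Icc 1 2 := by
  set v' : H.verts := ⟨v, hH.1 v⟩
  have hv : v' ∈ (H.coe.connectedComponentMk v').supp := rfl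
  rw [← Nat.card_coe_set_eq, ← Nat.card_congr (H.coeNeighborSetEquiv v'), Nat.card_coe_set_eq]
  rcases hH.2 (H.coe.connectedComponentMk v') with h | h <;> obtain ⟨e⟩ := h
  · exact ncard_neighborSet_eq_of_iso_induce_supp e hv ▸
      ncard_neighborSet_pathGraph_mem_Icc (.inl rfl) _
  · exact ncard_neighborSet_eq_of_iso_induce_supp e hv ▸
      ncard_neighborSet_pathGraph_mem_Icc (.inr rfl) _

end Subgraph

section StarForest

open Function

variable [Fintype V] [DecidableEq V] {G : SimpleGraph V} {f f₀ : V → Option V}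
  {c d l t t' u v w x y z ℓ : V}

def leavesOf (f : V → Option V) (c : V) : Finset V := {v | f v = some c}

def coveredBy (f : V → Option V) : Finset V := {v | f v ≠ none ∨ ∃ u, f u = some v}

@[simp] lemma mem_leavesOf : v ∈ leavesOf f c ↔ f v = some c := by simp [leavesOf]

@[simp] lemma mem_coveredBy : v ∈ coveredBy f ↔ f v ≠ none ∨ ∃ u, f u = some v := by
  simp [coveredBy]

lemma notMem_coveredBy : v ∉ coveredBy f ↔ f v = none ∧ ∀ u, f u ≠ some v := by
  simp

lemma pairwiseDisjoint_leavesOf (f : V → Option V) (s : Set V) :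
    s.PairwiseDisjoint (leavesOf f) :=
  fun _ _ _ _ hcd => Finset.disjoint_left.2 fun _ hc hd =>
    hcd (Option.some_injective _ ((mem_leavesOf.1 hc).symm.trans (mem_leavesOf.1 hd)))

lemma leavesOf_update_none : leavesOf (update f x none) c = (leavesOf f c).erase x := by
  ext v; simp [update_none_apply_eq_some]

lemma leavesOf_update_some (hw : f w = none) :
    leavesOf (update f w (some c)) d = if d = c then insert w (leavesOf f d) else leavesOf f d := by
  ext v
  by_cases hd : d = c <;> by_cases hv : v = w <;> simp_all [eq_comm]

lemma mem_coveredBy_update_none : v ∈ coveredBy (update f x none) ↔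
    v ≠ x ∧ f v ≠ none ∨ ∃ u ≠ x, f u = some v := by
  by_cases hv : v = x <;> simp [hv, update_apply]

lemma mem_coveredBy_update_some (hw : f w = none) :
    v ∈ coveredBy (update f w (some c)) ↔ v ∈ coveredBy f ∨ v = c ∨ v = w := by
  by_cases hv : v = w
  · simp [hv]
  · simp only [mem_coveredBy, update_of_ne hv, update_some_apply_eq_some, hv, or_false]
    grind

lemma coveredBy_update_none_subset : coveredBy (update f x none) ⊆ coveredBy f := by
  intro v
  rw [mem_coveredBy_update_none, mem_coveredBy]
  rintro (⟨-, hv⟩ | ⟨u, -, hu⟩)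
  exacts [.inl hv, .inr ⟨u, hu⟩]

lemma notMem_coveredBy_update_none (hw : w ∉ coveredBy f) : w ∉ coveredBy (update f x none) :=
  fun h => hw (coveredBy_update_none_subset h)

structure IsStarForest (G : SimpleGraph V) (f : V → Option V) : Prop where
  adj : ∀ ⦃v c⦄, f v = some c → G.Adj c v
  center_eq_none : ∀ ⦃v c⦄, f v = some c → f c = none
  card_leavesOf_le : ∀ c, #(leavesOf f c) ≤ 2

lemma IsStarForest.ne_some_of_eq_some (hf : G.IsStarForest f) (hx : f x = some c) (u : V) :
    f u ≠ some x := fun hu => by simp [hf.center_eq_none hu] at hx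

lemma IsStarForest.leavesOf_eq_empty (hf : G.IsStarForest f) (hx : f x = some c) :
    leavesOf f x = ∅ :=
  eq_empty_of_forall_notMem fun u hu => hf.ne_some_of_eq_some hx u (mem_leavesOf.1 hu)

lemma IsStarForest.update_none (hf : G.IsStarForest f) (x : V) :
    G.IsStarForest (update f x none) where
  adj v c h := hf.adj (update_none_apply_eq_some.1 h).2
  center_eq_none v c h := by
    rw [update_apply, hf.center_eq_none (update_none_apply_eq_some.1 h).2, ite_self]
  card_leavesOf_le c := by
    rw [leavesOf_update_none]; exact (card_erase_le).trans (hf.card_leavesOf_le c)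

lemma IsStarForest.update_some (hf : G.IsStarForest f) (hcw : G.Adj c w) (hw : w ∉ coveredBy f)
    (hc : f c = none) (hcard : #(leavesOf f c) ≤ 1) : G.IsStarForest (update f w (some c)) := by
  rw [notMem_coveredBy] at hw
  refine ⟨fun v d h => ?_, fun v d h => ?_, fun d => ?_⟩
  · rcases update_some_apply_eq_some.1 h with ⟨rfl, rfl⟩ | ⟨-, h⟩
    exacts [hcw, hf.adj h]
  · rcases update_some_apply_eq_some.1 h with ⟨rfl, rfl⟩ | ⟨-, h⟩
    · rwa [update_of_ne hcw.ne]
    · rw [update_of_ne (fun hdw => hw.2 v (by rwa [← hdw])), hf.center_eq_none h]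
  · rw [leavesOf_update_some hw.1]
    split_ifs with hd
    · exact (card_insert_le _ _).trans (by rw [hd]; omega)
    · exact hf.card_leavesOf_le d

lemma IsStarForest.exists_coveredBy_ssubset_of_center (hf : G.IsStarForest f)
    (hw : w ∉ coveredBy f) (hxw : G.Adj x w) (hx : f x = none) (hcard : #(leavesOf f x) ≤ 1) :
    ∃ g, G.IsStarForest g ∧ coveredBy f ⊂ coveredBy g := by
  have hfw := (notMem_coveredBy.1 hw).1
  refine ⟨_, hf.update_some hxw hw hx hcard, fun v hv => ?_, fun h => hw (h ?_)⟩
  all_goals simp_all [mem_coveredBy_update_some hfw]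

-- `x` leaves `c`, which keeps its leaf `y`, and becomes the center of the star `x – w`.
lemma IsStarForest.exists_coveredBy_ssubset_of_sibling (hf : G.IsStarForest f)
    (hw : w ∉ coveredBy f) (hxw : G.Adj x w) (hx : f x = some c) (hy : f y = some c)
    (hyx : y ≠ x) : ∃ g, G.IsStarForest g ∧ coveredBy f ⊂ coveredBy g := by
  have hw₁ : w ∉ coveredBy (update f x none) := notMem_coveredBy_update_none hw
  have hfw₁ := (notMem_coveredBy.1 hw₁).1
  refine ⟨_, (hf.update_none x).update_some hxw hw₁ (update_self ..) ?_, fun v hv => ?_,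
    fun h => hw (h ?_)⟩
  · simp [leavesOf_update_none, hf.leavesOf_eq_empty hx]
  · rw [mem_coveredBy_update_some hfw₁, mem_coveredBy_update_none]
    rw [mem_coveredBy] at hv
    grind
  · simp [mem_coveredBy_update_some hfw₁]

-- The star `c – x` is replaced by the star `c – x – w` centered at `x`.
lemma IsStarForest.exists_coveredBy_ssubset_of_sole_leaf (hf : G.IsStarForest f)
    (hw : w ∉ coveredBy f) (hxw : G.Adj x w) (hx : f x = some c)
    (hsole : leavesOf f c = {x}) : ∃ g, G.IsStarForest g ∧ coveredBy f ⊂ coveredBy g := by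
  have hw₁ : w ∉ coveredBy (update f x none) := notMem_coveredBy_update_none hw
  have hfw₁ := (notMem_coveredBy.1 hw₁).1
  have hf₂ := (hf.update_none x).update_some hxw hw₁ (update_self ..)
    (by simp [leavesOf_update_none, hf.leavesOf_eq_empty hx])
  have hcx : c ≠ x := (hf.adj hx).ne
  have hc₂ : c ∉ coveredBy (update (update f x none) w (some x)) := by
    rw [mem_coveredBy_update_some hfw₁, mem_coveredBy_update_none]
    have := hf.center_eq_none hx
    have := (notMem_coveredBy.1 hw).2 x
    have : ∀ u, f u = some c → u = x := fun u hu => by simpa [hsole] using mem_leavesOf.2 hu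
    grind
  have hfc₂ := (notMem_coveredBy.1 hc₂).1
  refine ⟨_, hf₂.update_some (hf.adj hx).symm hc₂ ?_ ?_, fun v hv => ?_, fun h => hw (h ?_)⟩
  · simp [hxw.ne]
  · simp [leavesOf_update_some hfw₁, leavesOf_update_none, hf.leavesOf_eq_empty hx]
  · rw [mem_coveredBy_update_some hfc₂, mem_coveredBy_update_some hfw₁,
      mem_coveredBy_update_none]
    rw [mem_coveredBy] at hv
    grind
  · simp [mem_coveredBy_update_some hfc₂, mem_coveredBy_update_some hfw₁]

def IsMaxStarForest (G : SimpleGraph V) (f : V → Option V) : Prop :=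
  G.IsStarForest f ∧ ∀ g, G.IsStarForest g → #(coveredBy g) ≤ #(coveredBy f)

theorem exists_isMaxStarForest (G : SimpleGraph V) : ∃ f, G.IsMaxStarForest f := by
  classical
  have hnone : G.IsStarForest fun _ => none := by constructor <;> simp [leavesOf]
  obtain ⟨f, hf, hmax⟩ := exists_max_image ({f | G.IsStarForest f} : Finset (V → Option V))
    (fun f => #(coveredBy f)) ⟨_, mem_filter.2 ⟨mem_univ _, hnone⟩⟩
  exact ⟨f, (mem_filter.1 hf).2, fun g hg => hmax g (mem_filter.2 ⟨mem_univ _, hg⟩)⟩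

theorem IsMaxStarForest.eq_none_and_card_leavesOf_eq_two_of_adj (hf : G.IsMaxStarForest f)
    (hw : w ∉ coveredBy f) (hxw : G.Adj x w) : f x = none ∧ #(leavesOf f x) = 2 := by
  have hno : ¬ ∃ g, G.IsStarForest g ∧ coveredBy f ⊂ coveredBy g :=
    fun ⟨g, hg, hlt⟩ => (card_lt_card hlt).not_ge (hf.2 g hg)
  cases hfx : f x with
  | none =>
    refine ⟨rfl, le_antisymm (hf.1.card_leavesOf_le x) (not_lt.1 fun h => hno ?_)⟩
    exact hf.1.exists_coveredBy_ssubset_of_center hw hxw hfx (by omega)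
  | some c =>
    refine hno.elim ?_
    by_cases hsib : ∃ y, f y = some c ∧ y ≠ x
    · obtain ⟨y, hy, hyx⟩ := hsib
      exact hf.1.exists_coveredBy_ssubset_of_sibling hw hxw hfx hy hyx
    · have hsole : leavesOf f c = {x} := eq_singleton_iff_unique_mem.2 ⟨mem_leavesOf.2 hfx,
        fun y hy => by_contra fun hyx => hsib ⟨y, mem_leavesOf.1 hy, hyx⟩⟩
      exact hf.1.exists_coveredBy_ssubset_of_sole_leaf hw hxw hfx hsole

def swapLeaf (f : V → Option V) (c ℓ w : V) : V → Option V :=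
  update (update f ℓ none) w (some c)

lemma IsStarForest.isStarForest_swapLeaf (hf : G.IsStarForest f) (hℓ : f ℓ = some c)
    (hw : w ∉ coveredBy f) (hcw : G.Adj c w) : G.IsStarForest (swapLeaf f c ℓ w) := by
  refine (hf.update_none ℓ).update_some hcw (notMem_coveredBy_update_none hw) ?_ ?_
  · rw [update_of_ne (hf.adj hℓ).ne, hf.center_eq_none hℓ]
  · rw [leavesOf_update_none, card_erase_of_mem (mem_leavesOf.2 hℓ)]
    have := hf.card_leavesOf_le c
    omega

lemma card_leavesOf_swapLeaf (hℓ : f ℓ = some c) (hw : w ∉ coveredBy f) (d : V) :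
    #(leavesOf (swapLeaf f c ℓ w) d) = #(leavesOf f d) := by
  have hfw₁ := (notMem_coveredBy.1 (notMem_coveredBy_update_none (x := ℓ) hw)).1
  rw [swapLeaf, leavesOf_update_some hfw₁, leavesOf_update_none]
  split_ifs with hd
  · subst hd
    have hw' : w ∉ (leavesOf f d).erase ℓ := fun h =>
      hw (mem_coveredBy.2 (.inl (by simp [mem_leavesOf.1 (mem_of_mem_erase h)])))
    rw [card_insert_of_notMem hw', card_erase_add_one (mem_leavesOf.2 hℓ)]
  · rw [erase_eq_of_notMem]
    simpa [hℓ] using Ne.symm hd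

lemma IsStarForest.notMem_coveredBy_swapLeaf (hf : G.IsStarForest f) (hℓ : f ℓ = some c)
    (hw : w ∉ coveredBy f) : ℓ ∉ coveredBy (swapLeaf f c ℓ w) := by
  have hfw := (notMem_coveredBy.1 hw).1
  have hfw₁ := (notMem_coveredBy.1 (notMem_coveredBy_update_none (x := ℓ) hw)).1
  rw [swapLeaf, mem_coveredBy_update_some hfw₁, mem_coveredBy_update_none]
  have := hf.ne_some_of_eq_some hℓ
  have := (hf.adj hℓ).ne
  grind

lemma IsStarForest.coveredBy_swapLeaf (hf : G.IsStarForest f) (hℓ : f ℓ = some c)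
    (hw : w ∉ coveredBy f) :
    coveredBy (swapLeaf f c ℓ w) = insert w ((coveredBy f).erase ℓ) := by
  have hfw := (notMem_coveredBy.1 hw).1
  have hfw₁ := (notMem_coveredBy.1 (notMem_coveredBy_update_none (x := ℓ) hw)).1
  ext v
  rw [swapLeaf, mem_coveredBy_update_some hfw₁, mem_coveredBy_update_none, mem_insert, mem_erase,
    mem_coveredBy]
  have := hf.ne_some_of_eq_some hℓ
  have := (hf.adj hℓ).ne
  grind

def SwapStep (G : SimpleGraph V) (f g : V → Option V) : Prop :=
  ∃ c ℓ w, f ℓ = some c ∧ w ∉ coveredBy f ∧ G.Adj c w ∧ g = swapLeaf f c ℓ w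

abbrev SwapReachable (G : SimpleGraph V) : (V → Option V) → (V → Option V) → Prop :=
  Relation.ReflTransGen G.SwapStep

lemma SwapStep.isMaxStarForest {g : V → Option V} (h : G.SwapStep f g)
    (hf : G.IsMaxStarForest f) : G.IsMaxStarForest g := by
  obtain ⟨c, ℓ, w, hℓ, hw, hcw, rfl⟩ := h
  refine ⟨hf.1.isStarForest_swapLeaf hℓ hw hcw, fun g hg => ?_⟩
  have hℓmem : ℓ ∈ coveredBy f := mem_coveredBy.2 (.inl (by simp [hℓ]))
  rw [hf.1.coveredBy_swapLeaf hℓ hw, card_insert_of_notMem fun h => hw (mem_of_mem_erase h),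
    card_erase_add_one hℓmem]
  exact hf.2 g hg

lemma SwapReachable.isMaxStarForest (h : G.SwapReachable f₀ f)
    (hf₀ : G.IsMaxStarForest f₀) : G.IsMaxStarForest f := by
  induction h with
  | refl => exact hf₀
  | tail _ hstep ih => exact hstep.isMaxStarForest ih

lemma SwapReachable.card_leavesOf (h : G.SwapReachable f₀ f) (d : V) :
    #(leavesOf f d) = #(leavesOf f₀ d) := by
  induction h with
  | refl => rfl
  | tail _ hstep ih =>
    obtain ⟨c, ℓ, w, hℓ, hw, -, rfl⟩ := hstep
    rw [card_leavesOf_swapLeaf hℓ hw, ih]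

def IsExposed (G : SimpleGraph V) (f₀ : V → Option V) (v : V) : Prop :=
  ∃ f, G.SwapReachable f₀ f ∧ v ∉ coveredBy f

lemma SwapReachable.eq_some_or_isExposed (h : G.SwapReachable f₀ f)
    (hf₀ : G.IsMaxStarForest f₀) {m : V} (hm : f₀ m = some x) :
    f m = some x ∨ G.IsExposed f₀ m := by
  induction h with
  | refl => exact .inl hm
  | @tail f g hreach hstep ih =>
    obtain ⟨c, ℓ, w, hℓ, hw, -, rfl⟩ := id hstep
    rcases ih with hfm | hexp
    · rcases eq_or_ne m ℓ with rfl | hmℓ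
      · exact .inr ⟨_, hreach.tail hstep,
          (SwapReachable.isMaxStarForest hreach hf₀).1.notMem_coveredBy_swapLeaf hℓ hw⟩
      · have hmw : m ≠ w := fun h => by simp [h, (notMem_coveredBy.1 hw).1] at hfm
        rw [swapLeaf, update_of_ne hmw, update_of_ne hmℓ, hfm]
        exact .inl rfl
    · exact .inr hexp

lemma IsMaxStarForest.card_leavesOf_of_adj_isExposed (hf₀ : G.IsMaxStarForest f₀)
    (ht : G.IsExposed f₀ t) (hxt : G.Adj x t) : #(leavesOf f₀ x) = 2 := by
  obtain ⟨f, hreach, htf⟩ := ht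
  rw [← hreach.card_leavesOf]
  exact ((hreach.isMaxStarForest hf₀).eq_none_and_card_leavesOf_eq_two_of_adj htf hxt).2

lemma IsMaxStarForest.isExposed_of_adj_isExposed (hf₀ : G.IsMaxStarForest f₀)
    (ht : G.IsExposed f₀ t) (hxt : G.Adj x t) {m : V} (hm : f₀ m = some x) :
    G.IsExposed f₀ m := by
  obtain ⟨f, hreach, htf⟩ := ht
  refine (hreach.eq_some_or_isExposed hf₀ hm).elim (fun hfm => ?_) id
  exact ⟨_, hreach.tail ⟨x, m, t, hfm, htf, hxt, rfl⟩,
    (hreach.isMaxStarForest hf₀).1.notMem_coveredBy_swapLeaf hfm htf⟩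

lemma IsMaxStarForest.not_adj_of_isExposed (hf₀ : G.IsMaxStarForest f₀)
    (ht : G.IsExposed f₀ t) (ht' : G.IsExposed f₀ t') : ¬ G.Adj t t' := by
  intro hadj
  have htwo := hf₀.card_leavesOf_of_adj_isExposed ht' hadj
  obtain ⟨f, hreach, htf⟩ := ht
  rw [← hreach.card_leavesOf] at htwo
  obtain ⟨u, hu⟩ := card_pos.1 (htwo ▸ two_pos : 0 < #(leavesOf f t))
  exact htf (mem_coveredBy.2 (.inr ⟨u, mem_leavesOf.1 hu⟩))

theorem IsMaxStarForest.coveredBy_eq_univ [DecidableRel G.Adj]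
    (hf₀ : G.IsMaxStarForest f₀)
    (h : ∀ S : Finset V, #{v | v ∉ S ∧ ∀ w, G.Adj v w → w ∈ S} ≤ 2 * #S) :
    coveredBy f₀ = univ := by
  classical
  by_contra hne
  obtain ⟨u₀, -, hu₀⟩ := exists_of_ssubset (ssubset_univ_iff.2 hne)
  set T : Finset V := {t | G.IsExposed f₀ t}
  set S : Finset V := {x | ∃ t, G.IsExposed f₀ t ∧ G.Adj x t}
  have hT : T ⊆ ({v | v ∉ S ∧ ∀ w, G.Adj v w → w ∈ S} : Finset V) := by
    intro t ht
    simp only [T, S, mem_filter, mem_univ, true_and, not_exists, not_and] at ht ⊢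
    exact ⟨fun t' ht' hadj => hf₀.not_adj_of_isExposed ht ht' hadj,
      fun w hw => ⟨t, ht, hw.symm⟩⟩
  have hL : insert u₀ (S.biUnion (leavesOf f₀)) ⊆ T := by
    intro v hv
    rw [mem_insert, mem_biUnion] at hv
    rw [mem_filter]
    rcases hv with rfl | ⟨x, hx, hvx⟩
    · exact ⟨mem_univ _, f₀, .refl, hu₀⟩
    · obtain ⟨t, ht, hxt⟩ := (mem_filter.1 hx).2
      exact ⟨mem_univ _, hf₀.isExposed_of_adj_isExposed ht hxt (mem_leavesOf.1 hvx)⟩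
  have hcard : #(insert u₀ (S.biUnion (leavesOf f₀))) = 2 * #S + 1 := by
    have hu₀L : u₀ ∉ S.biUnion (leavesOf f₀) := fun h => by
      obtain ⟨x, -, hx⟩ := mem_biUnion.1 h
      exact hu₀ (mem_coveredBy.2 (.inl (by simp [mem_leavesOf.1 hx])))
    have hS : ∀ x ∈ S, #(leavesOf f₀ x) = 2 := fun x hx => by
      obtain ⟨t, ht, hxt⟩ := (mem_filter.1 hx).2
      exact hf₀.card_leavesOf_of_adj_isExposed ht hxt
    rw [card_insert_of_notMem hu₀L, card_biUnion (pairwiseDisjoint_leavesOf f₀ _),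
      sum_congr rfl hS, sum_const, smul_eq_mul, mul_comm]
  have := (card_le_card hL).trans ((card_le_card hT).trans (h S))
  omega

lemma IsStarForest.exists_center (hf : G.IsStarForest f) (hv : v ∈ coveredBy f) :
    ∃ z, f z = none ∧ (v = z ∨ f v = some z) ∧ (leavesOf f z).Nonempty := by
  rcases mem_coveredBy.1 hv with hfv | ⟨u, hu⟩
  · obtain ⟨z, hvz⟩ := Option.ne_none_iff_exists'.1 hfv
    exact ⟨z, hf.center_eq_none hvz, .inr hvz, v, mem_leavesOf.2 hvz⟩
  · exact ⟨v, hf.center_eq_none hu, .inl rfl, u, mem_leavesOf.2 hu⟩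

def IsStarForest.toSubgraph (hf : G.IsStarForest f) : G.Subgraph where
  verts := Set.univ
  Adj a b := f b = some a ∨ f a = some b
  adj_sub := by rintro a b (h | h); exacts [hf.adj h, (hf.adj h).symm]
  edge_vert _ := Set.mem_univ _
  symm := ⟨fun _ _ => Or.symm⟩

lemma IsStarForest.toSubgraph_adj_of_eq_none (hf : G.IsStarForest f) (hz : f z = none) (x : V) :
    hf.toSubgraph.Adj z x ↔ x ∈ leavesOf f z := by
  simp [toSubgraph, hz]

lemma IsStarForest.toSubgraph_adj_of_eq_some (hf : G.IsStarForest f) (hl : f l = some z) (x : V) :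
    hf.toSubgraph.Adj l x ↔ x = z := by
  simp [toSubgraph, hl, hf.ne_some_of_eq_some hl x, eq_comm]

theorem IsStarForest.isP23Factor_toSubgraph (hf : G.IsStarForest f) (hcov : coveredBy f = univ) :
    hf.toSubgraph.IsP23Factor := by
  set H := hf.toSubgraph
  refine ⟨fun _ => Set.mem_univ _, ConnectedComponent.ind fun ⟨v, hv⟩ => ?_⟩
  obtain ⟨z, hz, hvz, hleaves⟩ := hf.exists_center (hcov ▸ mem_univ v)
  have hC : H.coe.connectedComponentMk ⟨v, hv⟩ =
      H.coe.connectedComponentMk ⟨z, Set.mem_univ z⟩ := by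
    rcases hvz with rfl | hvz
    · rfl
    · have hadj : H.coe.Adj ⟨z, Set.mem_univ z⟩ ⟨v, hv⟩ := .inl hvz
      exact (ConnectedComponent.connectedComponentMk_eq_of_adj hadj).symm
  rw [hC]
  have hcard := hf.card_leavesOf_le z
  have hpos := hleaves.card_pos
  obtain h1 | h2 : #(leavesOf f z) = 1 ∨ #(leavesOf f z) = 2 := by omega
  · obtain ⟨l, hl⟩ := card_eq_one.1 h1
    have hlz : f l = some z := mem_leavesOf.1 (hl ▸ mem_singleton_self l)
    left
    refine nonempty_iso_pathGraph_two (b := ⟨l, Set.mem_univ l⟩) (fun x => ?_) (fun x => ?_)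
    · simp [Subtype.ext_iff, hf.toSubgraph_adj_of_eq_none hz, hl, H]
    · simp [Subtype.ext_iff, hf.toSubgraph_adj_of_eq_some hlz, H]
  · obtain ⟨l₁, l₂, hne, hl⟩ := card_eq_two.1 h2
    have hl₁ : f l₁ = some z := mem_leavesOf.1 (by simp [hl])
    have hl₂ : f l₂ = some z := mem_leavesOf.1 (by simp [hl])
    right
    refine nonempty_iso_pathGraph_three (a := ⟨l₁, Set.mem_univ l₁⟩)
      (c := ⟨l₂, Set.mem_univ l₂⟩) (by simpa [Subtype.ext_iff] using hne)
      (fun x => ?_) (fun x => ?_) (fun x => ?_)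
    · simp [Subtype.ext_iff, hf.toSubgraph_adj_of_eq_some hl₁, H]
    · simp [Subtype.ext_iff, hf.toSubgraph_adj_of_eq_none hz, hl, H]
    · simp [Subtype.ext_iff, hf.toSubgraph_adj_of_eq_some hl₂, H]

end StarForest

end SimpleGraph

theorem akiyama_jin_era_general {V : Type*} [Fintype V] (G : SimpleGraph V) :
    (∃ H : G.Subgraph, H.IsSpanning ∧
        ∀ c : H.coe.ConnectedComponent,
          Nonempty ((H.coe.induce c.supp) ≃g pathGraph 2) ∨
          Nonempty ((H.coe.induce c.supp) ≃g pathGraph 3)) ↔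
      ∀ S : Finset V, isolatedCount (G.induce ((↑S : Set V)ᶜ)) ≤ 2 * S.card := by
  classical
  simp_rw [isolatedCount_induce_compl]
  constructor
  · rintro ⟨H, hH⟩
    exact card_isolated_le_of_ncard_neighborSet_mem_Icc H
      (Subgraph.IsP23Factor.ncard_neighborSet_mem_Icc hH)
  · intro h
    obtain ⟨f, hf⟩ := G.exists_isMaxStarForest
    exact ⟨_, hf.1.isP23Factor_toSubgraph (hf.coveredBy_eq_univ h)⟩

/-- Akiyama–Jin–Era theorem: `G` has a `{P₂, P₃}`-factor iff
`i(G - S) ≤ 2|S|` for all vertex subsets `S`. -/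
theorem akiyama_jin_era {V : Type*} [Fintype V] [DecidableEq V] (G : SimpleGraph V) :
    (∃ H : G.Subgraph, H.IsSpanning ∧
        ∀ c : H.coe.ConnectedComponent,
          Nonempty ((H.coe.induce c.supp) ≃g pathGraph 2) ∨
          Nonempty ((H.coe.induce c.supp) ≃g pathGraph 3)) ↔
      ∀ S : Finset V, isolatedCount (G.induce ((↑S : Set V)ᶜ)) ≤ 2 * S.card :=
  akiyama_jin_era_general G
end

section
/- Let G be a finite simple graph on n vertices. If the number of edges of G exceeds C(n−1, 2) + 1, then G has a Hamiltonian cycle (Ore's edge-count theorem). -/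
/-!
The edge count forces Ore's condition: for distinct non-adjacent `u`, `v`, every edge either meets
`u` or `v` or lies among the other `n - 2` vertices, so `|E| ≤ deg u + deg v + C(n-2, 2)`, and
`C(n-1, 2) = C(n-2, 2) + (n - 2)` turns the hypothesis into `deg u + deg v ≥ n`.

Ore's condition gives a Hamiltonian cycle. Take a longest path `a ⋯ b`; all neighbours of `a` and
`b` lie on it. If `a`, `b` are not adjacent, `deg a + deg b ≥ n` exceeds the number of edges of the
path, so some edge `x y` of it has `b ~ x` and `a ~ y`, and `a ⋯ x b ⋯ y a` is a cycle through
all vertices of the path. A vertex `w` off this cycle has a neighbour on it, since otherwise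
`deg a + deg w ≤ n - 2`; opening the cycle at that neighbour and prepending `w` gives a longer path.

Paths are lists of distinct vertices with consecutive ones adjacent; cycles are `Cycle`s.
-/

open SimpleGraph Finset

theorem List.card_filter_range_getD_mem {α : Type*} [DecidableEq α] {l : List α} (hl : l.Nodup)
    {s : Finset α} (hs : ∀ x ∈ s, x ∈ l) (d : α) :
    #{k ∈ Finset.range l.length | l.getD k d ∈ s} = #s := by
  refine card_nbij (l.getD · d) (fun k hk => (Finset.mem_filter.1 hk).2) ?_ ?_
  · intro i hi j hj hij
    simp only [coe_filter, Finset.mem_range, Set.mem_ofPred_eq] at hi hj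
    dsimp only at hij
    rw [getD_eq_getElem _ _ hi.1, getD_eq_getElem _ _ hj.1] at hij
    exact hl.getElem_inj_iff.1 hij
  · intro x hx
    obtain ⟨k, hk, rfl⟩ := mem_iff_getElem.1 (hs x hx)
    refine ⟨k, ?_, getD_eq_getElem _ _ hk⟩
    simpa [getD_eq_getElem _ _ hk, hk] using hx

namespace SimpleGraph

variable {V : Type*} {G : SimpleGraph V}

theorem degree_lt_card_of_forall_adj_mem [Fintype V] [DecidableRel G.Adj] {s : Finset V}
    {v : V} (hv : v ∈ s) (h : ∀ w, G.Adj v w → w ∈ s) : G.degree v < #s := by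
  rw [← card_neighborFinset_eq_degree]
  have hsub : G.neighborFinset v ⊆ s := fun w hw => h w ((mem_neighborFinset _ _ _).1 hw)
  exact card_lt_card ((ssubset_iff_of_subset hsub).2
    ⟨v, hv, fun hvv => G.irrefl ((mem_neighborFinset _ _ _).1 hvv)⟩)

def OreCondition [Fintype V] (G : SimpleGraph V) [DecidableRel G.Adj] : Prop :=
  ∀ u v, u ≠ v → ¬G.Adj u v → Fintype.card V ≤ G.degree u + G.degree v

section Counting

variable [Fintype V] [DecidableEq V] [DecidableRel G.Adj]

theorem card_edgeFinset_le_degree_add_choose (v : V) :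
    #G.edgeFinset ≤ G.degree v + (Fintype.card V - 1).choose 2 := by
  have hdel : #(G.induce {v}ᶜ).edgeFinset = #G.edgeFinset - G.degree v := by
    rw [card_edgeFinset_induce_compl_singleton, card_edgeFinset_deleteIncidenceSet]
  have := (G.induce {v}ᶜ).card_edgeFinset_le_card_choose_two
  rw [hdel, Fintype.card_compl_set, Set.card_singleton] at this
  omega

theorem card_edgeFinset_le_degree_add_degree_add_choose {u v : V} (huv : u ≠ v)
    (hadj : ¬G.Adj u v) :
    #G.edgeFinset ≤ G.degree u + G.degree v + (Fintype.card V - 2).choose 2 := by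
  have hdel : #(G.induce {u}ᶜ).edgeFinset = #G.edgeFinset - G.degree u := by
    rw [card_edgeFinset_induce_compl_singleton, card_edgeFinset_deleteIncidenceSet]
  have hv : v ∈ ({u}ᶜ : Set V) := huv.symm
  have hdeg : (G.induce {u}ᶜ).degree ⟨v, hv⟩ = G.degree v :=
    degree_induce_of_neighborSet_subset fun w hw hwu => hadj (hwu ▸ (G.adj_symm hw))
  have := (G.induce {u}ᶜ).card_edgeFinset_le_degree_add_choose ⟨v, hv⟩
  rw [hdel, hdeg, Fintype.card_compl_set, Set.card_singleton, Nat.sub_sub, one_add_one_eq_two]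
    at this
  omega

theorem oreCondition_of_card_edgeFinset
    (h : (Fintype.card V - 1).choose 2 + 1 < #G.edgeFinset) : G.OreCondition := by
  intro u v huv hadj
  obtain ⟨m, hm⟩ : ∃ m, Fintype.card V = m + 2 :=
    ⟨_, (Nat.sub_add_cancel (Fintype.one_lt_card_iff_nontrivial.2 ⟨u, v, huv⟩)).symm⟩
  have hchoose : (m + 1).choose 2 = m.choose 2 + m := by
    rw [Nat.choose_succ_succ', Nat.choose_one_right, add_comm]
  have := card_edgeFinset_le_degree_add_degree_add_choose huv hadj
  rw [hm] at this h
  simp only [Nat.add_sub_cancel, Nat.add_succ_sub_one] at this h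
  omega

end Counting

theorem exists_longest_path [Fintype V] [Nonempty V] :
    ∃ l : List V, l ≠ [] ∧ l.IsChain G.Adj ∧ l.Nodup ∧
      ∀ m : List V, m.IsChain G.Adj → m.Nodup → m.length ≤ l.length := by
  have : Finite {m : List V // m.IsChain G.Adj ∧ m.Nodup} :=
    Finite.of_injective (fun m => (⟨m.1, m.2.2⟩ : {m : List V // m.Nodup}))
      fun _ _ h => Subtype.ext (congrArg (·.1) h :)
  obtain ⟨v⟩ : Nonempty V := inferInstance
  have : Nonempty {m : List V // m.IsChain G.Adj ∧ m.Nodup} :=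
    ⟨⟨[v], List.isChain_singleton v, List.nodup_singleton v⟩⟩
  obtain ⟨⟨l, hch, hnd⟩, hmax⟩ :=
    Finite.exists_max fun m : {m : List V // m.IsChain G.Adj ∧ m.Nodup} => m.1.length
  refine ⟨l, ?_, hch, hnd, fun m hm hm' => hmax ⟨m, hm, hm'⟩⟩
  rintro rfl
  simpa using hmax ⟨[v], List.isChain_singleton v, List.nodup_singleton v⟩

theorem mem_of_adj_head_of_longest {l : List V} (hne : l ≠ []) (hch : l.IsChain G.Adj)
    (hnd : l.Nodup) (hmax : ∀ m : List V, m.IsChain G.Adj → m.Nodup → m.length ≤ l.length)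
    {x : V} (hx : G.Adj (l.head hne) x) : x ∈ l := by
  by_contra hxl
  have hch' : (x :: l).IsChain G.Adj := by
    rw [← List.cons_head_tail hne] at hch ⊢
    exact List.isChain_cons_cons.2 ⟨hx.symm, hch⟩
  simpa using hmax _ hch' (List.nodup_cons.2 ⟨hxl, hnd⟩)

theorem mem_of_adj_getLast_of_longest {l : List V} (hne : l ≠ []) (hch : l.IsChain G.Adj)
    (hnd : l.Nodup) (hmax : ∀ m : List V, m.IsChain G.Adj → m.Nodup → m.length ≤ l.length)
    {x : V} (hx : G.Adj (l.getLast hne) x) : x ∈ l := by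
  have hrev : l.reverse.IsChain G.Adj := List.isChain_reverse.2 (hch.imp fun _ _ h => h.symm)
  rw [← List.mem_reverse]
  refine mem_of_adj_head_of_longest (by simpa using hne) hrev (List.nodup_reverse.2 hnd)
    (by simpa using hmax) ?_
  rwa [List.head_reverse]

theorem exists_split_of_length_le_degree_add_degree [Fintype V] [DecidableEq V]
    [DecidableRel G.Adj] {l : List V} (hne : l ≠ []) (hnd : l.Nodup)
    (hhead : ∀ x, G.Adj (l.head hne) x → x ∈ l) (hlast : ∀ x, G.Adj (l.getLast hne) x → x ∈ l)
    (hdeg : l.length ≤ G.degree (l.head hne) + G.degree (l.getLast hne)) :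
    ∃ (l₁ l₂ : List V) (h₁ : l₁ ≠ []) (h₂ : l₂ ≠ []), l = l₁ ++ l₂ ∧
      G.Adj (l₁.head h₁) (l₂.head h₂) ∧ G.Adj (l₁.getLast h₁) (l₂.getLast h₂) := by
  set a := l.head hne
  set b := l.getLast hne
  -- `k ∈ A ↔ a ~ l[k+1]` and `k ∈ B ↔ b ~ l[k]`, for `k < |l| - 1`
  set A := {k ∈ range (l.length - 1) | l.tail.getD k a ∈ G.neighborFinset a} with hAdef
  set B := {k ∈ range (l.length - 1) | l.dropLast.getD k a ∈ G.neighborFinset b} with hBdef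
  have hA : #A = G.degree a := by
    rw [hAdef, ← List.length_tail, List.card_filter_range_getD_mem (hnd.sublist l.tail_sublist),
      card_neighborFinset_eq_degree]
    intro x hx
    rw [mem_neighborFinset] at hx
    exact List.mem_of_ne_of_mem hx.ne' ((List.cons_head_tail hne).symm ▸ hhead x hx)
  have hB : #B = G.degree b := by
    rw [hBdef, ← List.length_dropLast,
      List.card_filter_range_getD_mem (hnd.sublist l.dropLast_sublist),
      card_neighborFinset_eq_degree]
    intro x hx
    rw [mem_neighborFinset] at hx
    exact List.mem_dropLast_of_mem_of_ne_getLast (hlast x hx) hx.ne'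
  have hcard : #(range (l.length - 1)) < #A + #B := by
    rw [hA, hB, card_range]
    have := List.length_pos_iff.2 hne
    omega
  obtain ⟨k, hk⟩ := inter_nonempty_of_card_lt_card_add_card (filter_subset _ _)
    (filter_subset _ _) hcard
  simp only [Finset.mem_inter, Finset.mem_filter, Finset.mem_range, mem_neighborFinset] at hk
  obtain ⟨⟨hkl, hka⟩, -, hkb⟩ := hk
  rw [List.getD_eq_getElem _ _ (by simpa using hkl), List.getElem_tail] at hka
  rw [List.getD_eq_getElem _ _ (by simpa using hkl), List.getElem_dropLast] at hkb
  refine ⟨l.take (k + 1), l.drop (k + 1), by simp [hne], by simp; omega,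
    (List.take_append_drop _ _).symm, ?_, ?_⟩
  · rwa [List.head_take, List.head_drop]
  · rw [List.getLast_take, List.getLast_drop, Nat.add_sub_cancel,
      List.getElem?_eq_getElem (by omega), Option.getD_some]
    exact hkb.symm

theorem isChain_coe_append_reverse {l₁ l₂ : List V} (h₁ : l₁ ≠ []) (h₂ : l₂ ≠ [])
    (hch : (l₁ ++ l₂).IsChain G.Adj) (hhead : G.Adj (l₁.head h₁) (l₂.head h₂))
    (hlast : G.Adj (l₁.getLast h₁) (l₂.getLast h₂)) :
    (↑(l₁ ++ l₂.reverse) : Cycle V).Chain G.Adj := by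
  rw [Cycle.chain_ne_nil _ (by simp [h₁]), List.getLast_append_of_ne_nil _ (by simpa using h₂),
    List.getLast_reverse, ← List.cons_append, List.isChain_append]
  obtain ⟨hch₁, hch₂, -⟩ := List.isChain_append.1 hch
  refine ⟨?_, List.isChain_reverse.2 (hch₂.imp fun _ _ h => h.symm), ?_⟩
  · obtain ⟨a, m, rfl⟩ := List.exists_cons_of_ne_nil h₁
    exact List.isChain_cons_cons.2 ⟨hhead.symm, hch₁⟩
  · obtain ⟨a, m, rfl⟩ := List.exists_cons_of_ne_nil h₁
    simpa [List.getLast?_cons_cons, List.getLast?_eq_some_getLast h₁, List.head?_reverse,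
      List.getLast?_eq_some_getLast h₂] using hlast

theorem exists_longer_path_of_adj {c : List V} (hc : (c : Cycle V).Chain G.Adj) (hnd : c.Nodup)
    {w x : V} (hw : w ∉ c) (hx : x ∈ c) (hwx : G.Adj w x) :
    ∃ m : List V, m.IsChain G.Adj ∧ m.Nodup ∧ m.length = c.length + 1 := by
  obtain ⟨c₁, c₂, rfl⟩ := List.append_of_mem hx
  have hrot : (↑(c₁ ++ x :: c₂) : Cycle V) = ↑(x :: (c₂ ++ c₁)) :=
    Cycle.coe_eq_coe.2 List.isRotated_append
  rw [hrot, Cycle.chain_coe_cons, ← List.cons_append, List.isChain_append] at hc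
  have hperm : (x :: (c₂ ++ c₁)).Perm (c₁ ++ x :: c₂) := by
    simpa using (List.perm_append_comm (l₁ := x :: c₂) (l₂ := c₁))
  refine ⟨w :: x :: (c₂ ++ c₁), List.isChain_cons_cons.2 ⟨hwx, hc.1⟩,
    List.nodup_cons.2 ⟨fun h => hw (hperm.subset h), hperm.nodup_iff.2 hnd⟩, ?_⟩
  simp [hperm.length_eq]

theorem Walk.IsPath.isHamiltonianCycle_cons [Fintype V] [DecidableEq V] {u v : V}
    {p : G.Walk u v} (hp : p.IsPath) (h : G.Adj v u) (hlen : p.length + 1 = Fintype.card V)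
    (h3 : 3 ≤ Fintype.card V) : (Walk.cons h p).IsHamiltonianCycle := by
  rw [Walk.isHamiltonianCycle_iff_isCycle_and_length_eq,
    Walk.isCycle_iff_isPath_tail_and_le_length, Walk.tail_cons, Walk.length_cons]
  exact ⟨⟨(Walk.isPath_copy _ _ _).2 hp, by omega⟩, hlen⟩

theorem isHamiltonian_of_spanning_cycle_chain [Fintype V] [DecidableEq V] {c : List V}
    (hc : (c : Cycle V).Chain G.Adj) (hnd : c.Nodup) (hspan : ∀ v, v ∈ c)
    (h3 : 3 ≤ Fintype.card V) : G.IsHamiltonian := by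
  intro _
  have hlen : c.length = Fintype.card V := by
    rw [← List.toFinset_card_of_nodup hnd,
      Finset.eq_univ_of_forall fun v => List.mem_toFinset.2 (hspan v), card_univ]
  obtain ⟨x, t, rfl⟩ := List.exists_cons_of_ne_nil (l := c) (List.ne_nil_of_length_pos (by omega))
  rw [Cycle.chain_ne_nil _ (List.cons_ne_nil x t), List.isChain_cons_cons] at hc
  have hpath : (Walk.ofSupport (x :: t) (List.cons_ne_nil x t) hc.2).IsPath :=
    Walk.IsPath.mk' (by rwa [Walk.support_ofSupport])
  refine ⟨_, _, hpath.isHamiltonianCycle_cons hc.1 ?_ h3⟩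
  rw [Walk.length_ofSupport]
  simpa using hlen

section Ore

variable [Fintype V] [DecidableEq V] [DecidableRel G.Adj]

theorem OreCondition.exists_cycle_chain_perm_of_longest [Nontrivial V] (hore : G.OreCondition)
    {l : List V} (hne : l ≠ []) (hch : l.IsChain G.Adj) (hnd : l.Nodup)
    (hmax : ∀ m : List V, m.IsChain G.Adj → m.Nodup → m.length ≤ l.length) :
    ∃ c : List V, (c : Cycle V).Chain G.Adj ∧ c.Perm l := by
  have hhead := fun x => mem_of_adj_head_of_longest hne hch hnd hmax (x := x)
  have hlast := fun x => mem_of_adj_getLast_of_longest hne hch hnd hmax (x := x)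
  by_cases hba : G.Adj (l.getLast hne) (l.head hne)
  · obtain ⟨x, t, rfl⟩ := List.exists_cons_of_ne_nil hne
    exact ⟨x :: t, (Cycle.chain_ne_nil _ hne).2 (List.isChain_cons_cons.2 ⟨hba, hch⟩), .refl _⟩
  -- a one-vertex longest path is an isolated vertex, which Ore's condition rules out
  have hab : l.head hne ≠ l.getLast hne := by
    intro hab
    obtain ⟨x, rfl⟩ := (hnd.head_eq_getLast_iff hne).1 hab
    have hx : G.degree x < #{x} := degree_lt_card_of_forall_adj_mem (mem_singleton_self x)
      fun y hy => by simpa using hhead y hy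
    obtain ⟨u, hu⟩ := exists_ne x
    have := hore u x hu fun hux => by simpa [hux.ne] using hhead u hux.symm
    have := G.degree_lt_card_verts u
    simp at hx
    omega
  obtain ⟨l₁, l₂, h₁, h₂, rfl, hhead₁₂, hlast₁₂⟩ := exists_split_of_length_le_degree_add_degree
    hne hnd hhead hlast
    (hnd.length_le_card.trans (hore _ _ hab fun h => hba h.symm))
  exact ⟨l₁ ++ l₂.reverse, isChain_coe_append_reverse h₁ h₂ hch hhead₁₂ hlast₁₂,
    (List.reverse_perm l₂).append_left l₁⟩

theorem OreCondition.exists_adj_mem_of_forall_adj_head_mem (hore : G.OreCondition)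
    {l : List V} (hne : l ≠ []) (hhead : ∀ x, G.Adj (l.head hne) x → x ∈ l) {w : V}
    (hw : w ∉ l) : ∃ x ∈ l, G.Adj w x := by
  by_contra! hno
  have hdega : G.degree (l.head hne) < #l.toFinset :=
    degree_lt_card_of_forall_adj_mem (List.mem_toFinset.2 (List.head_mem hne))
      fun x hx => List.mem_toFinset.2 (hhead x hx)
  have hdegw : G.degree w < #l.toFinsetᶜ :=
    degree_lt_card_of_forall_adj_mem (by simpa using hw)
      fun x hx => by simpa using fun hxl => hno x hxl hx
  have := hore w (l.head hne) (ne_of_mem_of_not_mem (List.head_mem hne) hw).symm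
    (hno _ (List.head_mem hne))
  rw [card_compl] at hdegw
  have := card_le_univ l.toFinset
  omega

theorem OreCondition.isHamiltonian (hore : G.OreCondition) (h3 : 3 ≤ Fintype.card V) :
    G.IsHamiltonian := by
  have : Nontrivial V := Fintype.one_lt_card_iff_nontrivial.1 (by omega)
  obtain ⟨l, hne, hch, hnd, hmax⟩ := exists_longest_path (G := G)
  obtain ⟨c, hc, hperm⟩ := hore.exists_cycle_chain_perm_of_longest hne hch hnd hmax
  have hcnd : c.Nodup := hperm.nodup_iff.2 hnd
  refine isHamiltonian_of_spanning_cycle_chain hc hcnd (fun w => ?_) h3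
  by_contra hw
  obtain ⟨x, hx, hwx⟩ := hore.exists_adj_mem_of_forall_adj_head_mem hne
    (fun x => mem_of_adj_head_of_longest hne hch hnd hmax) (fun h => hw (hperm.mem_iff.2 h))
  obtain ⟨m, hmch, hmnd, hmlen⟩ :=
    exists_longer_path_of_adj hc hcnd hw (hperm.mem_iff.2 hx) hwx
  have := hmax m hmch hmnd
  rw [hperm.length_eq] at hmlen
  omega

end Ore

end SimpleGraph

/-- Ore's edge-count theorem: a graph on `n ≥ 3` vertices with more than
`C(n-1, 2) + 1` edges has a Hamiltonian cycle. -/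
theorem ore_edge_count_hamiltonian {V : Type*} [Fintype V] [DecidableEq V]
    (G : SimpleGraph V) (n : ℕ) (hn : n = Fintype.card V) (hn3 : 3 ≤ n)
    (h : Nat.card G.edgeSet > (n - 1).choose 2 + 1) :
    ∃ (v : V) (c : G.Walk v v), c.IsHamiltonianCycle := by
  classical
  have : Nontrivial V := Fintype.one_lt_card_iff_nontrivial.1 (by omega)
  obtain ⟨v⟩ : Nonempty V := inferInstance
  have hE : (Fintype.card V - 1).choose 2 + 1 < #G.edgeFinset := by
    rw [edgeFinset_card, ← hn, ← Nat.card_eq_fintype_card]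
    exact h
  have hG : G.IsHamiltonian := (oreCondition_of_card_edgeFinset hE).isHamiltonian (hn ▸ hn3)
  exact ⟨v, hG.exists_isHamiltonianCycle v⟩
end

section
/- If G is a finite simple graph on n vertices that has a unique perfect matching, then G has at most n²/4 edges (Lovász). -/
/-!
The partner map `p` of the unique perfect matching is an involution, and uniqueness forbids
alternating 4-cycles: if `x ~ y` and `p x ~ p y` with `y ≠ p x`, re-pairing `x` with `y` and
`p x` with `p y` gives a second perfect matching. So the neighbourhood of `x` and the
`p`-preimage of the neighbourhood of `p x` both miss `x` and meet at most in `p x`, whence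
`deg x + deg (p x) ≤ n`; summing over `x` gives `4 |E| ≤ n²`.
-/

namespace SimpleGraph

open Finset

variable {V : Type*} {G : SimpleGraph V}

namespace Subgraph

def ofInvolutive (p : V → V) (hp : Function.Involutive p) (hadj : ∀ v, G.Adj v (p v)) :
    G.Subgraph where
  verts := Set.univ
  Adj v w := p v = w
  adj_sub := by rintro v _ rfl; exact hadj v
  edge_vert _ := trivial
  symm := ⟨by rintro v _ rfl; exact hp v⟩

theorem isPerfectMatching_ofInvolutive (p : V → V) (hp : Function.Involutive p)
    (hadj : ∀ v, G.Adj v (p v)) : (ofInvolutive p hp hadj).IsPerfectMatching :=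
  isPerfectMatching_iff.mpr fun _ => existsUnique_eq'

theorem IsPerfectMatching.exists_involutive {M : G.Subgraph} (hM : M.IsPerfectMatching) :
    ∃ p : V → V, Function.Involutive p ∧ ∀ v w, M.Adj v w ↔ p v = w := by
  choose p hp hp_unique using isPerfectMatching_iff.mp hM
  refine ⟨p, fun v => (hp_unique (p v) v (hp v).symm).symm, fun v w => ⟨?_, ?_⟩⟩
  · exact fun h => (hp_unique v w h).symm
  · rintro rfl
    exact hp v

end Subgraph

open Subgraph in
theorem eq_of_adj_of_adj_of_existsUnique_isPerfectMatching
    (huniq : ∃! M : G.Subgraph, M.IsPerfectMatching) {p : V → V} (hp : Function.Involutive p)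
    (hadj : ∀ v, G.Adj v (p v)) {x y : V} (hxy : G.Adj x y) (hpxy : G.Adj (p x) (p y)) :
    y = p x := by
  classical
  set σ := Equiv.swap y (p x)
  -- `q` re-pairs `x` with `y` and `p x` with `p y`, and agrees with `p` elsewhere.
  set q : V → V := fun v => σ (p (σ v))
  have hq : Function.Involutive q := fun v => by simp only [q, σ, Equiv.swap_apply_self, hp _]
  have hqx : q x = y := by
    simp [q, σ, Equiv.swap_apply_of_ne_of_ne hxy.ne (hadj x).ne]
  have hqadj : ∀ v, G.Adj v (q v) := by
    intro v
    simp only [q, σ, Equiv.swap_apply_def]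
    split_ifs <;> grind [Adj.ne, Adj.symm, Function.Involutive]
  have heq := huniq.unique (isPerfectMatching_ofInvolutive q hq hqadj)
    (isPerfectMatching_ofInvolutive p hp hadj)
  have : (ofInvolutive q hq hqadj).Adj x y := hqx
  rw [heq] at this
  exact Eq.symm this

section Counting

variable [Fintype V] [DecidableRel G.Adj]

theorem degree_add_degree_le_card {p : V ≃ V}
    (halt : ∀ x y, G.Adj x y → G.Adj (p x) (p y) → y = p x) (x : V) :
    G.degree x + G.degree (p x) ≤ Fintype.card V := by
  classical
  set N := G.neighborFinset x
  set T := (G.neighborFinset (p x)).map p.symm.toEmbedding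
  have hT : #T = G.degree (p x) := by simp [T]
  have hunion : #(N ∪ T) < Fintype.card V := card_lt_univ_of_notMem (x := x) (by simp [N, T])
  have hinter : #(N ∩ T) ≤ 1 := by
    refine (card_le_card fun y hy => ?_).trans (card_singleton (p x)).le
    simp only [mem_inter, N, T, mem_neighborFinset, mem_map_equiv, Equiv.symm_symm] at hy
    exact mem_singleton.mpr (halt x y hy.1 hy.2)
  have hsum := card_union_add_card_inter N T
  rw [card_neighborFinset_eq_degree] at hsum
  omega

theorem four_mul_card_edgeFinset_le {p : V ≃ V}
    (halt : ∀ x y, G.Adj x y → G.Adj (p x) (p y) → y = p x) :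
    4 * #G.edgeFinset ≤ Fintype.card V ^ 2 := by
  calc 4 * #G.edgeFinset = ∑ x, (G.degree x + G.degree (p x)) := by
        rw [sum_add_distrib, Equiv.sum_comp p (G.degree ·), sum_degrees_eq_twice_card_edges]; ring
    _ ≤ ∑ _x : V, Fintype.card V := sum_le_sum fun x _ => degree_add_degree_le_card halt x
    _ = Fintype.card V ^ 2 := by simp [sq]

end Counting

end SimpleGraph

open SimpleGraph

/-- Lovász: a graph on `n` vertices with a unique perfect matching has at most
`n²/4` edges. -/
theorem lovasz_unique_perfect_matching_edges {V : Type*} [Fintype V] (G : SimpleGraph V)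
    (n : ℕ) (hn : n = Fintype.card V)
    (huniq : ∃! M : G.Subgraph, M.IsPerfectMatching) :
    (Nat.card G.edgeSet : ℝ) ≤ (n : ℝ) ^ 2 / 4 := by
  classical
  obtain ⟨M, hM⟩ := huniq.exists
  obtain ⟨p, hp, hMp⟩ := hM.exists_involutive
  have hadj : ∀ v, G.Adj v (p v) := fun v => M.adj_sub ((hMp v (p v)).mpr rfl)
  have hbound := four_mul_card_edgeFinset_le (p := hp.toPerm p) fun x y hxy hpxy =>
    eq_of_adj_of_adj_of_existsUnique_isPerfectMatching huniq hp hadj hxy hpxy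
  rw [Nat.card_eq_fintype_card, ← edgeFinset_card, hn]
  have : (4 * G.edgeFinset.card : ℝ) ≤ Fintype.card V ^ 2 := by exact_mod_cast hbound
  linarith
end

section
/- Let G be a finite simple graph on n vertices with m edges and minimum degree δ ≥ 1. Then the adjacency spectral radius satisfies ρ(G) ≤ (δ−1)/2 + sqrt(2m − nδ + (δ+1)²/4) (Hong–Shu–Fang / Nikiforov bound). -/
open SimpleGraph

open Finset Matrix

/-!
Let `ρ` be the largest eigenvalue of the adjacency matrix `A`. Replacing an eigenvector by its
entrywise absolute value gives a nonnegative eigenvector `z` for `ρ` (a weak Perron–Frobenius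
theorem), which we scale so that `max z = z u = 1`. Put `σ = ∑ z`. Summing `A z = ρ z` over all
vertices gives `ρ σ = ∑ d_v z_v ≤ 2m - δ (n - σ)`, since `(d_v - δ) (1 - z_v) ≥ 0`; the row of `u`
gives `σ ≥ 1 + ρ`; and `ρ ≥ δ`. Hence `(ρ - δ) (ρ + 1) ≤ 2m - δ n`, a quadratic inequality in `ρ`
whose solution is the bound.
-/

namespace Matrix

variable {n : Type*} [Fintype n]

lemma dotProduct_mulVec_le_abs_dotProduct_mulVec_abs {A : Matrix n n ℝ} (hA : ∀ i j, 0 ≤ A i j)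
    (y : n → ℝ) :
    y ⬝ᵥ (A *ᵥ y) ≤ |y| ⬝ᵥ (A *ᵥ |y|) := by
  simp only [dotProduct, mulVec, mul_sum]
  refine sum_le_sum fun i _ => sum_le_sum fun j _ => ?_
  calc y i * (A i j * y j) ≤ |y i * (A i j * y j)| := le_abs_self _
    _ = |y| i * (A i j * |y| j) := by simp [abs_mul, abs_of_nonneg (hA i j)]

variable [DecidableEq n]

lemma exists_mulVec_eq_smul_of_mem_spectrum {K : Type*} [Field K] {A : Matrix n n K} {μ : K}
    (h : μ ∈ spectrum K A) : ∃ y ≠ 0, A *ᵥ y = μ • y := by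
  rw [← spectrum_toLin', ← Module.End.hasEigenvalue_iff_mem_spectrum] at h
  obtain ⟨y, hy⟩ := h.exists_hasEigenvector
  exact ⟨y, hy.2, by simpa using hy.apply_eq_smul⟩

variable {A : Matrix n n ℝ}

lemma IsHermitian.sSup_spectrum_mem [Nonempty n] (hA : A.IsHermitian) :
    sSup (spectrum ℝ A) ∈ spectrum ℝ A :=
  (hA.spectrum_real_eq_range_eigenvalues ▸ Set.range_nonempty _).csSup_mem A.finite_spectrum

lemma IsHermitian.posSemidef_sSup_spectrum_smul_one_sub (hA : A.IsHermitian) :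
    (sSup (spectrum ℝ A) • 1 - A).PosSemidef := by
  refine posSemidef_iff_isHermitian_and_spectrum_nonneg.2
    ⟨(isHermitian_one.smul (.all _)).sub hA, ?_⟩
  rw [← Algebra.algebraMap_eq_smul_one, ← spectrum.singleton_sub_eq]
  rintro _ ⟨_, rfl, b, hb, rfl⟩
  exact sub_nonneg.2 (le_csSup A.finite_spectrum.bddAbove hb)

/-- For an eigenvector `y` of the top eigenvalue `μ`, passing to `|y|` does not decrease the
Rayleigh quotient, so `|y|` lies in the kernel of the positive semidefinite matrix `μ • 1 - A`. -/
theorem IsHermitian.exists_nonneg_mulVec_eq_sSup_spectrum_smul [Nonempty n] (hA : A.IsHermitian)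
    (hA0 : ∀ i j, 0 ≤ A i j) :
    ∃ x ≠ 0, 0 ≤ x ∧ A *ᵥ x = sSup (spectrum ℝ A) • x := by
  set μ := sSup (spectrum ℝ A)
  obtain ⟨y, hy0, hy⟩ := exists_mulVec_eq_smul_of_mem_spectrum hA.sSup_spectrum_mem
  have hM := hA.posSemidef_sSup_spectrum_smul_one_sub
  have habs : |y| ⬝ᵥ |y| = y ⬝ᵥ y := sum_congr rfl fun i _ => abs_mul_abs_self (y i)
  have hquad : star |y| ⬝ᵥ ((μ • 1 - A) *ᵥ |y|) ≤ 0 := by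
    have := dotProduct_mulVec_le_abs_dotProduct_mulVec_abs hA0 y
    simp only [star_trivial, sub_mulVec, smul_mulVec, one_mulVec, dotProduct_sub,
      dotProduct_smul, smul_eq_mul, habs, hy] at this ⊢
    linarith
  have hker :=
    (hM.dotProduct_mulVec_zero_iff _).1 (le_antisymm hquad (hM.dotProduct_mulVec_nonneg _))
  refine ⟨|y|, fun h => hy0 (funext fun i => abs_eq_zero.1 (congrFun h i)), abs_nonneg y, ?_⟩
  rwa [sub_mulVec, smul_mulVec, one_mulVec, sub_eq_zero, eq_comm] at hker

theorem IsHermitian.exists_mulVec_eq_sSup_spectrum_smul_le_one [Nonempty n] (hA : A.IsHermitian)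
    (hA0 : ∀ i j, 0 ≤ A i j) :
    ∃ z : n → ℝ, ∃ u, A *ᵥ z = sSup (spectrum ℝ A) • z ∧ 0 ≤ z ∧ z ≤ 1 ∧ z u = 1 := by
  obtain ⟨x, hx0, hx, hAx⟩ := hA.exists_nonneg_mulVec_eq_sSup_spectrum_smul hA0
  obtain ⟨u, hu⟩ := Finite.exists_max x
  have hxu : 0 < x u := by
    refine (hx u).lt_of_ne fun h => hx0 (funext fun v => le_antisymm ?_ (hx v))
    exact h ▸ hu v
  refine ⟨(x u)⁻¹ • x, u, by rw [mulVec_smul, hAx, smul_comm], fun v => ?_, fun v => ?_, ?_⟩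
  · simpa using mul_nonneg (inv_nonneg.2 hxu.le) (hx v)
  · simpa [inv_mul_le_iff₀ hxu] using hu v
  · simp [hxu.ne']

end Matrix

lemma le_half_add_sqrt_of_sub_mul_add_one_le {μ δ c : ℝ} (h : (μ - δ) * (μ + 1) ≤ c) :
    μ ≤ (δ - 1) / 2 + √(c + (δ + 1) ^ 2 / 4) := by
  have : |μ - (δ - 1) / 2| ≤ √(c + (δ + 1) ^ 2 / 4) :=
    Real.abs_le_sqrt (by linear_combination h)
  linarith [le_abs_self (μ - (δ - 1) / 2)]

namespace SimpleGraph

variable {V : Type*} [Fintype V] {G : SimpleGraph V} [DecidableRel G.Adj]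

lemma sum_adjMatrix_mulVec {α : Type*} [Semiring α] (f : V → α) :
    ∑ v, (G.adjMatrix α *ᵥ f) v = ∑ v, G.degree v * f v := by
  calc ∑ v, (G.adjMatrix α *ᵥ f) v = (fun _ => 1) ᵥ* G.adjMatrix α ⬝ᵥ f := by
        rw [← dotProduct_mulVec]; simp [dotProduct]
    _ = ∑ v, G.degree v * f v := by simp [dotProduct, adjMatrix_vecMul_apply]

variable {μ : ℝ} {z : V → ℝ}

lemma sum_degree_mul_eq_mul_sum (hz : G.adjMatrix ℝ *ᵥ z = μ • z) :
    ∑ v, (G.degree v : ℝ) * z v = μ * ∑ v, z v := by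
  rw [← sum_adjMatrix_mulVec, hz, mul_sum]
  rfl

lemma sum_degree_mul_le (hz1 : z ≤ 1) :
    ∑ v, (G.degree v : ℝ) * z v ≤
      2 * #G.edgeFinset - G.minDegree * (Fintype.card V - ∑ v, z v) := by
  calc ∑ v, (G.degree v : ℝ) * z v ≤ ∑ v, ((G.degree v : ℝ) - G.minDegree * (1 - z v)) := by
        gcongr with v
        have hδ : (G.minDegree : ℝ) ≤ G.degree v := by exact_mod_cast G.minDegree_le_degree v
        have hz1v : z v ≤ 1 := hz1 v
        nlinarith [mul_nonneg (sub_nonneg.2 hδ) (sub_nonneg.2 hz1v)]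
    _ = _ := by
        rw [sum_sub_distrib, ← mul_sum, sum_sub_distrib]
        simp [← Nat.cast_sum, sum_degrees_eq_twice_card_edges]

lemma minDegree_le_of_mulVec_eq_smul (hz : G.adjMatrix ℝ *ᵥ z = μ • z) (hz0 : 0 ≤ z)
    (hz_ne : z ≠ 0) : (G.minDegree : ℝ) ≤ μ := by
  obtain ⟨v, hv⟩ := Function.ne_iff.1 hz_ne
  have hσ : 0 < ∑ v, z v := sum_pos' (fun v _ => hz0 v) ⟨v, mem_univ v, (hz0 v).lt_of_ne' hv⟩
  refine le_of_mul_le_mul_right ?_ hσ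
  rw [← sum_degree_mul_eq_mul_sum hz, mul_sum]
  gcongr with v
  · exact hz0 v
  · exact G.minDegree_le_degree v

variable [DecidableEq V]

lemma one_add_le_sum (hz : G.adjMatrix ℝ *ᵥ z = μ • z) (hz0 : 0 ≤ z) {u : V} (hzu : z u = 1) :
    1 + μ ≤ ∑ v, z v := by
  have hu := congrFun hz u
  rw [adjMatrix_mulVec_apply, Pi.smul_apply, hzu, smul_eq_mul, mul_one] at hu
  calc 1 + μ = ∑ v ∈ insert u (G.neighborFinset u), z v := by
        rw [sum_insert (G.notMem_neighborFinset_self u), hzu, hu]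
    _ ≤ ∑ v, z v := sum_le_sum_of_subset_of_nonneg (subset_univ _) fun v _ _ => hz0 v

lemma sub_minDegree_mul_add_one_le (hz : G.adjMatrix ℝ *ᵥ z = μ • z) (hz0 : 0 ≤ z) (hz1 : z ≤ 1)
    {u : V} (hzu : z u = 1) :
    (μ - G.minDegree) * (μ + 1) ≤ 2 * #G.edgeFinset - G.minDegree * Fintype.card V := by
  have hδ := minDegree_le_of_mulVec_eq_smul hz hz0 fun h => by simp [h] at hzu
  have hσ := one_add_le_sum hz hz0 hzu
  have hsum := sum_degree_mul_le (G := G) hz1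
  rw [sum_degree_mul_eq_mul_sum hz] at hsum
  nlinarith

end SimpleGraph

theorem hong_shu_fang_nikiforov_general {V : Type*} [Fintype V] [DecidableEq V]
    (G : SimpleGraph V) [DecidableRel G.Adj]
    (n m δ : ℕ) (hn : n = Fintype.card V) (hm : m = Nat.card G.edgeSet)
    (hδ : δ = G.minDegree) :
    specRad G ≤ ((δ : ℝ) - 1) / 2 +
      Real.sqrt (2 * (m : ℝ) - (n : ℝ) * (δ : ℝ) + ((δ : ℝ) + 1) ^ 2 / 4) := by
  subst hn hm hδ
  rcases isEmpty_or_nonempty V with hV | hV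
  · norm_num [specRad, spectrum.of_subsingleton, minDegree_of_subsingleton]
  obtain ⟨z, u, hz, hz0, hz1, hzu⟩ :=
    (G.isHermitian_adjMatrix ℝ).exists_mulVec_eq_sSup_spectrum_smul_le_one fun i j => by
      by_cases h : G.Adj i j <;> simp [h]
  refine le_half_add_sqrt_of_sub_mul_add_one_le ?_
  rw [Nat.card_eq_fintype_card, card_edgeSet, mul_comm (Fintype.card V : ℝ)]
  exact sub_minDegree_mul_add_one_le hz hz0 hz1 hzu

/-- Hong–Shu–Fang / Nikiforov bound:
`ρ(G) ≤ (δ-1)/2 + sqrt(2m - nδ + (δ+1)²/4)`. -/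
theorem hong_shu_fang_nikiforov {V : Type*} [Fintype V] [DecidableEq V]
    (G : SimpleGraph V) [DecidableRel G.Adj]
    (n m δ : ℕ) (hn : n = Fintype.card V) (hm : m = Nat.card G.edgeSet)
    (hδ : δ = G.minDegree) (hδ1 : 1 ≤ δ) :
    specRad G ≤ ((δ : ℝ) - 1) / 2 +
      Real.sqrt (2 * (m : ℝ) - (n : ℝ) * (δ : ℝ) + ((δ : ℝ) + 1) ^ 2 / 4) :=
  hong_shu_fang_nikiforov_general G n m δ hn hm hδ
end
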